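/- arXiv:1302.5653 — 6 statements merged into one kernel-verified Lean document; each statement's English description precedes it below -/
import Mathlib

section
/- For every natural number n ≥ 1 there exists a meager Fσ-subset A of the finite-dimensional cube Iⁿ = Fin n → [0,1] such that for every meager subset B of Iⁿ there is a homeomorphism h : Iⁿ → Iⁿ with h(B) ⊆ A; that is, Iⁿ contains a universal meager Fσ-set. -/
open Set Topology

/-- The finite-dimensional cube `Iⁿ = Fin n → [0,1]` with the product topology. -/
abbrev Cube (n : ℕ) : Type := Fin n → unitInterval

/-- A set is `Fσ` if it is a countable union of closed sets. -/
def IsFsigma {X : Type*} [TopologicalSpace X] (A : Set X) : Prop :=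
  ∃ F : ℕ → Set X, (∀ n, IsClosed (F n)) ∧ A = ⋃ n, F n

/-!
A point of the cube lies in a level-`m` middle cell if each of its coordinates lies in the open
middle fifth of one of the `5 ^ m` standard intervals of length `5⁻ᵐ`. The universal set consists
of the points lying in middle cells of only finitely many levels; for each `N`, the points avoiding
all levels `≥ N` form a closed nowhere dense set.

A meagre set misses `⋂ m, U m` for some decreasing sequence of dense open sets `U m`. Subdivide
every coordinate recursively into `5 ^ m` intervals of length `≤ 2⁻ᵐ`, choosing at level `m + 1`
the middle subintervals so short that every product of them lies in `U m` (by density of `U m`,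
one box at a time). The coordinatewise homeomorphisms taking the standard `5`-adic grid onto these
partitions map every level-`m` middle cell into `U m`, so their inverse maps each point outside
`U k` into the universal set.
-/

-- Continued by `1` beyond `5 ^ m`, so that `e ⌊5 ^ m * x⌋₊` and `e (⌊5 ^ m * x⌋₊ + 1)` need no
-- clamping at `x = 1`.
structure IsQuinaryPartition (m : ℕ) (e : ℕ → ℝ) : Prop where
  map_zero : e 0 = 0
  eq_one : ∀ j, 5 ^ m ≤ j → e j = 1
  lt_succ : ∀ j < 5 ^ m, e j < e (j + 1)
  sub_le : ∀ j, e (j + 1) - e j ≤ (1 / 2) ^ m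

namespace IsQuinaryPartition

variable {m : ℕ} {e : ℕ → ℝ}

theorem monotone (he : IsQuinaryPartition m e) : Monotone e := by
  refine monotone_nat_of_le_succ fun j => ?_
  rcases lt_or_ge j (5 ^ m) with hj | hj
  · exact (he.lt_succ j hj).le
  · rw [he.eq_one j hj, he.eq_one (j + 1) (by omega)]

theorem nonneg (he : IsQuinaryPartition m e) (j : ℕ) : 0 ≤ e j :=
  he.map_zero ▸ he.monotone (Nat.zero_le j)

theorem le_one (he : IsQuinaryPartition m e) (j : ℕ) : e j ≤ 1 :=
  calc e j ≤ e (max j (5 ^ m)) := he.monotone (le_max_left _ _)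
    _ = 1 := he.eq_one _ (le_max_right _ _)

end IsQuinaryPartition

theorem isQuinaryPartition_zero : IsQuinaryPartition 0 fun j => min (j : ℝ) 1 where
  map_zero := by simp
  eq_one j hj := min_eq_right (by exact_mod_cast hj)
  lt_succ j hj := by simp_all
  sub_le j := by
    rcases Nat.eq_zero_or_pos j with rfl | hj
    · simp
    · have : (1 : ℝ) ≤ j := by exact_mod_cast hj
      simp [min_eq_right this]

-- The two midpoints make every new interval at most half as long as its parent, wherever
-- `a q < b q` lie inside it.
noncomputable def subdivide (e a b : ℕ → ℝ) (j : ℕ) : ℝ :=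
  ![e (j / 5), (e (j / 5) + a (j / 5)) / 2, a (j / 5), b (j / 5), (b (j / 5) + e (j / 5 + 1)) / 2]
    (Fin.ofNat 5 j)

section subdivide

variable {e a b : ℕ → ℝ}

theorem subdivide_apply (q : ℕ) (r : Fin 5) :
    subdivide e a b (5 * q + r) =
      ![e q, (e q + a q) / 2, a q, b q, (b q + e (q + 1)) / 2] r := by
  have hq : (5 * q + r) / 5 = q := by omega
  have hr : Fin.ofNat 5 (5 * q + r) = r := by ext; simp [Fin.ofNat]
  rw [subdivide, hq, hr]

@[simp]
theorem subdivide_five_mul (q : ℕ) : subdivide e a b (5 * q) = e q := by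
  simpa using subdivide_apply (e := e) (a := a) (b := b) q 0

@[simp]
theorem subdivide_five_mul_add_two (q : ℕ) : subdivide e a b (5 * q + 2) = a q := by
  simpa using subdivide_apply (e := e) (a := a) (b := b) q 2

@[simp]
theorem subdivide_five_mul_add_three (q : ℕ) : subdivide e a b (5 * q + 3) = b q := by
  simpa using subdivide_apply (e := e) (a := a) (b := b) q 3

theorem subdivide_apply_succ (q : ℕ) (r : Fin 5) :
    subdivide e a b (5 * q + r + 1) =
      ![(e q + a q) / 2, a q, b q, (b q + e (q + 1)) / 2, e (q + 1)] r := by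
  fin_cases r
  · exact subdivide_apply q 1
  · exact subdivide_apply q 2
  · exact subdivide_apply q 3
  · exact subdivide_apply q 4
  · simpa [mul_add] using subdivide_apply (e := e) (a := a) (b := b) (q + 1) 0

variable {m : ℕ}

theorem IsQuinaryPartition.subdivide (he : IsQuinaryPartition m e)
    (hea : ∀ q < 5 ^ m, e q < a q) (hab : ∀ q < 5 ^ m, a q < b q)
    (hbe : ∀ q < 5 ^ m, b q < e (q + 1)) (hba : ∀ q < 5 ^ m, b q - a q ≤ (1 / 2) ^ (m + 1))
    (ha : ∀ q, 5 ^ m ≤ q → a q = 1) (hb : ∀ q, 5 ^ m ≤ q → b q = 1) :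
    IsQuinaryPartition (m + 1) (subdivide e a b) := by
  have split (j : ℕ) : ∃ q, ∃ r : Fin 5, j = 5 * q + r :=
    ⟨j / 5, Fin.ofNat 5 j, by simp [Fin.ofNat]; omega⟩
  have hpow : 5 ^ (m + 1) = 5 ^ m * 5 := pow_succ 5 m
  have outside (q : ℕ) (hq : 5 ^ m ≤ q) :
      e q = 1 ∧ e (q + 1) = 1 ∧ a q = 1 ∧ b q = 1 :=
    ⟨he.eq_one q hq, he.eq_one (q + 1) (by omega), ha q hq, hb q hq⟩
  refine ⟨?_, fun j hj => ?_, fun j hj => ?_, fun j => ?_⟩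
  · simpa [he.map_zero] using subdivide_apply (e := e) (a := a) (b := b) 0 0
  · obtain ⟨q, r, rfl⟩ := split j
    obtain ⟨h1, h2, h3, h4⟩ := outside q (by omega)
    rw [subdivide_apply]
    fin_cases r <;> simp [h1, h2, h3, h4]
  · obtain ⟨q, r, rfl⟩ := split j
    have hq : q < 5 ^ m := by omega
    have := hea q hq
    have := hab q hq
    have := hbe q hq
    rw [subdivide_apply, subdivide_apply_succ]
    fin_cases r <;>
      simp only [Fin.zero_eta, Fin.mk_one, Fin.reduceFinMk, Matrix.cons_val_zero,
        Matrix.cons_val_one, Matrix.cons_val] <;> linarith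
  · obtain ⟨q, r, rfl⟩ := split j
    rw [subdivide_apply, subdivide_apply_succ]
    rcases lt_or_ge q (5 ^ m) with hq | hq
    · have h1 := hea q hq
      have h2 := hbe q hq
      have h5 := hab q hq
      have h3 := hba q hq
      have h4 := he.sub_le q
      rw [pow_succ] at h3 ⊢
      fin_cases r <;>
      simp only [Fin.zero_eta, Fin.mk_one, Fin.reduceFinMk, Matrix.cons_val_zero,
        Matrix.cons_val_one, Matrix.cons_val] <;> linarith
    · obtain ⟨h1, h2, h3, h4⟩ := outside q hq
      fin_cases r <;> simp [h1, h2, h3, h4]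

end subdivide

section boxes

variable {ι M : Type*} [Fintype ι] {U : Set (ι → unitInterval)}

theorem exists_shrink_box_subset (hUo : IsOpen U) (hUd : Dense U) {a b : ι → M → ℝ}
    (h0 : ∀ i j, 0 ≤ a i j) (hab : ∀ i j, a i j < b i j) (h1 : ∀ i j, b i j ≤ 1) (κ : ι → M) :
    ∃ a' b' : ι → M → ℝ, (∀ i j, a i j ≤ a' i j ∧ a' i j < b' i j ∧ b' i j ≤ b i j) ∧
      (univ.pi fun i => Subtype.val ⁻¹' Icc (a' i (κ i)) (b' i (κ i))) ⊆ U := by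
  classical
  set V : Set (ι → unitInterval) := univ.pi fun i => Subtype.val ⁻¹' Ioo (a i (κ i)) (b i (κ i))
  have hVo : IsOpen V :=
    isOpen_set_pi finite_univ fun i _ => isOpen_Ioo.preimage continuous_subtype_val
  have hVne : V.Nonempty := by
    refine ⟨fun i => ⟨(a i (κ i) + b i (κ i)) / 2, ?_, ?_⟩, fun i _ => ⟨?_, ?_⟩⟩ <;>
      linarith [h0 i (κ i), hab i (κ i), h1 i (κ i)]
  obtain ⟨x, hxV, hxU⟩ := hUd.inter_open_nonempty V hVo hVne
  obtain ⟨r, hr, hball⟩ := Metric.isOpen_iff.mp hUo x hxU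
  refine ⟨fun i j => if j = κ i then max (a i j) (x i - r / 2) else a i j,
    fun i j => if j = κ i then min (b i j) (x i + r / 2) else b i j, fun i j => ?_,
    fun y hy => hball ?_⟩
  · dsimp only
    split_ifs with hj
    · subst hj
      have hxi := hxV i (mem_univ i)
      exact ⟨le_max_left _ _, max_lt (lt_min (hab i _) (by linarith [hxi.1]))
        (lt_min (by linarith [hxi.2]) (by linarith)), min_le_left _ _⟩
    · exact ⟨le_rfl, hab i j, le_rfl⟩
  · refine Metric.mem_ball.mpr (lt_of_le_of_lt ((dist_pi_le_iff (by positivity)).2 fun i => ?_)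
      (half_lt_self hr))
    have hyi := hy i (mem_univ i)
    simp only [mem_preimage, ↓reduceIte, mem_Icc] at hyi
    rw [Subtype.dist_eq, Real.dist_eq, abs_sub_le_iff]
    constructor <;> linarith [le_max_right (a i (κ i)) (x i - r / 2),
      min_le_right (b i (κ i)) (x i + r / 2)]

theorem exists_shrink_boxes_subset (hUo : IsOpen U) (hUd : Dense U) (s : Finset (ι → M))
    {a b : ι → M → ℝ} (h0 : ∀ i j, 0 ≤ a i j) (hab : ∀ i j, a i j < b i j)
    (h1 : ∀ i j, b i j ≤ 1) :
    ∃ a' b' : ι → M → ℝ, (∀ i j, a i j ≤ a' i j ∧ a' i j < b' i j ∧ b' i j ≤ b i j) ∧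
      ∀ κ ∈ s, (univ.pi fun i => Subtype.val ⁻¹' Icc (a' i (κ i)) (b' i (κ i))) ⊆ U := by
  classical
  induction s using Finset.induction_on with
  | empty => exact ⟨a, b, fun i j => ⟨le_rfl, hab i j, le_rfl⟩, by simp⟩
  | insert κ s _ ih =>
    obtain ⟨a₁, b₁, hnest₁, hU₁⟩ := ih
    obtain ⟨a₂, b₂, hnest₂, hU₂⟩ := exists_shrink_box_subset hUo hUd
      (fun i j => (h0 i j).trans (hnest₁ i j).1) (fun i j => (hnest₁ i j).2.1)
      (fun i j => (hnest₁ i j).2.2.trans (h1 i j)) κ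
    refine ⟨a₂, b₂, fun i j => ⟨(hnest₁ i j).1.trans (hnest₂ i j).1, (hnest₂ i j).2.1,
      (hnest₂ i j).2.2.trans (hnest₁ i j).2.2⟩, fun κ' hκ' => ?_⟩
    rcases Finset.mem_insert.mp hκ' with rfl | hκ'
    · exact hU₂
    · exact (pi_mono fun i _ => preimage_mono <|
        Icc_subset_Icc (hnest₂ i (κ' i)).1 (hnest₂ i (κ' i)).2.2).trans (hU₁ κ' hκ')

end boxes

theorem exists_refinement {ι : Type*} [Fintype ι] {U : Set (ι → unitInterval)} (hUo : IsOpen U)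
    (hUd : Dense U) {m : ℕ} {e : ι → ℕ → ℝ} (he : ∀ i, IsQuinaryPartition m (e i)) :
    ∃ e' : ι → ℕ → ℝ, (∀ i, IsQuinaryPartition (m + 1) (e' i)) ∧ (∀ i j, e' i (5 * j) = e i j) ∧
      ∀ κ : ι → ℕ, (∀ i, κ i < 5 ^ m) →
        (univ.pi fun i => Subtype.val ⁻¹' Icc (e' i (5 * κ i + 2)) (e' i (5 * κ i + 3))) ⊆ U := by
  classical
  -- start from the middle third of each interval, shortened to length `≤ 2⁻⁽ᵐ⁺¹⁾`
  set t : ι → Fin (5 ^ m) → ℝ := fun i q => min ((e i (q + 1) - e i q) / 3) ((1 / 2) ^ (m + 1))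
  have ht (i q) : 0 < t i q := lt_min (by linarith [(he i).lt_succ q q.2]) (by positivity)
  have ht' (i q) : t i q ≤ (e i (q + 1) - e i q) / 3 := min_le_left _ _
  obtain ⟨a, b, hnest, hU⟩ := exists_shrink_boxes_subset hUo hUd Finset.univ
    (M := Fin (5 ^ m)) (a := fun i q => e i q + t i q) (b := fun i q => e i q + 2 * t i q)
    (fun i q => by linarith [(he i).nonneg q, ht i q]) (fun i q => by linarith [ht i q])
    (fun i q => by linarith [(he i).le_one q, (he i).le_one (q + 1), ht' i q])
  set a' : ι → ℕ → ℝ := fun i q => if h : q < 5 ^ m then a i ⟨q, h⟩ else 1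
  set b' : ι → ℕ → ℝ := fun i q => if h : q < 5 ^ m then b i ⟨q, h⟩ else 1
  have inside (i : ι) (q : ℕ) (hq : q < 5 ^ m) : e i q < a' i q ∧ a' i q < b' i q ∧
      b' i q < e i (q + 1) ∧ b' i q - a' i q ≤ (1 / 2) ^ (m + 1) := by
    obtain ⟨h1, h2, h3⟩ := hnest i ⟨q, hq⟩
    have h4 := ht i ⟨q, hq⟩
    have h5 := ht' i ⟨q, hq⟩
    have h6 : t i ⟨q, hq⟩ ≤ (1 / 2) ^ (m + 1) := min_le_right _ _
    simp only [a', b', dif_pos hq]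
    refine ⟨?_, h2, ?_, ?_⟩ <;> linarith
  refine ⟨fun i => subdivide (e i) (a' i) (b' i), fun i => (he i).subdivide
    (fun q hq => (inside i q hq).1) (fun q hq => (inside i q hq).2.1)
    (fun q hq => (inside i q hq).2.2.1) (fun q hq => (inside i q hq).2.2.2)
    (fun q hq => dif_neg hq.not_gt) (fun q hq => dif_neg hq.not_gt),
    fun i j => subdivide_five_mul j,
    fun κ hκ x hx => hU _ (Finset.mem_univ fun i => ⟨κ i, hκ i⟩) fun i _ => ?_⟩
  simpa [a', b', hκ i] using hx i (mem_univ i)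

structure IsNestedQuinaryPartition (E : ℕ → ℕ → ℝ) : Prop where
  partition : ∀ m, IsQuinaryPartition m (E m)
  nest : ∀ m j, E (m + 1) (5 * j) = E m j

theorem exists_nested_partitions {ι : Type*} [Fintype ι] {U : ℕ → Set (ι → unitInterval)}
    (hUo : ∀ m, IsOpen (U m)) (hUd : ∀ m, Dense (U m)) :
    ∃ E : ι → ℕ → ℕ → ℝ, (∀ i, IsNestedQuinaryPartition (E i)) ∧
      ∀ m (κ : ι → ℕ), (∀ i, κ i < 5 ^ m) →
        (univ.pi fun i => Subtype.val ⁻¹' Icc (E i (m + 1) (5 * κ i + 2))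
          (E i (m + 1) (5 * κ i + 3))) ⊆ U m := by
  choose next hnext using fun m (e : {e : ι → ℕ → ℝ // ∀ i, IsQuinaryPartition m (e i)}) =>
    exists_refinement (hUo m) (hUd m) e.2
  let E (m : ℕ) : {e : ι → ℕ → ℝ // ∀ i, IsQuinaryPartition m (e i)} :=
    Nat.rec ⟨fun _ j => min (j : ℝ) 1, fun _ => isQuinaryPartition_zero⟩
      (fun m e => ⟨next m e, (hnext m e).1⟩) m
  exact ⟨fun i m => (E m).1 i, fun i => ⟨fun m => (E m).2 i, fun m => (hnext m (E m)).2.1 i⟩,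
    fun m => (hnext m (E m)).2.2⟩

-- For nested partitions `E`, the increasing homeomorphism of `[0, 1]` with `k / 5 ^ m ↦ E m k`.
noncomputable def partitionLimit (E : ℕ → ℕ → ℝ) (x : ℝ) : ℝ := ⨆ m, E m ⌊5 ^ m * x⌋₊

theorem floor_five_pow_succ_mul_div_five (m : ℕ) (x : ℝ) :
    ⌊5 ^ (m + 1) * x⌋₊ / 5 = ⌊5 ^ m * x⌋₊ := by
  rw [← Nat.floor_div_ofNat]
  congr 1
  ring

namespace IsNestedQuinaryPartition

variable {E : ℕ → ℕ → ℝ}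

theorem apply_div_five_le (hE : IsNestedQuinaryPartition E) (m j : ℕ) :
    E m (j / 5) ≤ E (m + 1) j :=
  calc E m (j / 5) = E (m + 1) (5 * (j / 5)) := (hE.nest m _).symm
    _ ≤ E (m + 1) j := (hE.partition _).monotone (Nat.mul_div_le j 5)

theorem apply_succ_le (hE : IsNestedQuinaryPartition E) (m j : ℕ) :
    E (m + 1) (j + 1) ≤ E m (j / 5 + 1) :=
  calc E (m + 1) (j + 1) ≤ E (m + 1) (5 * (j / 5 + 1)) := (hE.partition _).monotone (by omega)
    _ = E m (j / 5 + 1) := hE.nest m _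

theorem apply_floor_le_apply_floor_add_one (hE : IsNestedQuinaryPartition E) (x : ℝ) (k m : ℕ) :
    E k ⌊5 ^ k * x⌋₊ ≤ E m (⌊5 ^ m * x⌋₊ + 1) := by
  have hlow : Monotone fun m => E m ⌊5 ^ m * x⌋₊ := monotone_nat_of_le_succ fun m => by
    simpa [floor_five_pow_succ_mul_div_five] using hE.apply_div_five_le m ⌊5 ^ (m + 1) * x⌋₊
  have hup : Antitone fun m => E m (⌊5 ^ m * x⌋₊ + 1) := antitone_nat_of_succ_le fun m => by
    simpa [floor_five_pow_succ_mul_div_five] using hE.apply_succ_le m ⌊5 ^ (m + 1) * x⌋₊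
  calc E k ⌊5 ^ k * x⌋₊ ≤ E (max k m) ⌊5 ^ max k m * x⌋₊ := hlow (le_max_left k m)
    _ ≤ E (max k m) (⌊5 ^ max k m * x⌋₊ + 1) := (hE.partition _).monotone (Nat.le_succ _)
    _ ≤ E m (⌊5 ^ m * x⌋₊ + 1) := hup (le_max_right k m)

theorem le_partitionLimit (hE : IsNestedQuinaryPartition E) (x : ℝ) (m : ℕ) :
    E m ⌊5 ^ m * x⌋₊ ≤ partitionLimit E x :=
  le_ciSup ⟨_, forall_mem_range.2 fun k => hE.apply_floor_le_apply_floor_add_one x k 0⟩ m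

theorem partitionLimit_le (hE : IsNestedQuinaryPartition E) (x : ℝ) (m : ℕ) :
    partitionLimit E x ≤ E m (⌊5 ^ m * x⌋₊ + 1) :=
  ciSup_le fun k => hE.apply_floor_le_apply_floor_add_one x k m

theorem mapsTo_partitionLimit (hE : IsNestedQuinaryPartition E) :
    MapsTo (partitionLimit E) unitInterval unitInterval := fun x _ =>
  ⟨((hE.partition 0).nonneg _).trans (hE.le_partitionLimit x 0),
    ciSup_le fun m => (hE.partition m).le_one _⟩

theorem monotone_partitionLimit (hE : IsNestedQuinaryPartition E) :
    Monotone (partitionLimit E) := fun x y hxy =>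
  ciSup_le fun m => ((hE.partition m).monotone (Nat.floor_mono (by gcongr))).trans
    (hE.le_partitionLimit y m)

theorem partitionLimit_sub_le (hE : IsNestedQuinaryPartition E) {x y : ℝ} (m : ℕ)
    (hxy : y - x ≤ (1 / 5) ^ m) :
    partitionLimit E y - partitionLimit E x ≤ 2 * (1 / 2) ^ m := by
  have hy : 5 ^ m * y ≤ 5 ^ m * x + 1 := by
    have : (5 : ℝ) ^ m * (1 / 5) ^ m = 1 := by rw [← mul_pow]; norm_num
    nlinarith [pow_pos (by norm_num : (0 : ℝ) < 5) m]
  have hfloor : ⌊5 ^ m * y⌋₊ + 1 ≤ ⌊5 ^ m * x⌋₊ + 2 := by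
    have hlt : 5 ^ m * y < ((⌊5 ^ m * x⌋₊ + 2 : ℕ) : ℝ) := by
      push_cast
      linarith [Nat.lt_floor_add_one (5 ^ m * x)]
    have := (Nat.floor_lt' (by omega)).2 hlt
    omega
  have := hE.partitionLimit_le y m
  have := hE.le_partitionLimit x m
  have := (hE.partition m).monotone hfloor
  have := (hE.partition m).sub_le ⌊5 ^ m * x⌋₊
  have := (hE.partition m).sub_le (⌊5 ^ m * x⌋₊ + 1)
  linarith

theorem continuous_partitionLimit (hE : IsNestedQuinaryPartition E) :
    Continuous (partitionLimit E) := by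
  refine Metric.continuous_iff.2 fun x ε hε => ?_
  obtain ⟨m, hm⟩ := exists_pow_lt_of_lt_one (half_pos hε) (by norm_num : (1 / 2 : ℝ) < 1)
  refine ⟨(1 / 5) ^ m, by positivity, fun y hy => ?_⟩
  rw [Real.dist_eq] at hy ⊢
  obtain ⟨hy₁, hy₂⟩ := abs_lt.1 hy
  rcases le_total x y with h | h
  · rw [abs_of_nonneg (sub_nonneg.2 (hE.monotone_partitionLimit h))]
    linarith [hE.partitionLimit_sub_le m (x := x) (y := y) (by linarith)]
  · rw [abs_of_nonpos (sub_nonpos.2 (hE.monotone_partitionLimit h))]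
    linarith [hE.partitionLimit_sub_le m (x := y) (y := x) (by linarith)]

theorem partitionLimit_zero (hE : IsNestedQuinaryPartition E) : partitionLimit E 0 = 0 := by
  simp [partitionLimit, (hE.partition _).map_zero]

theorem partitionLimit_one (hE : IsNestedQuinaryPartition E) : partitionLimit E 1 = 1 := by
  have (m : ℕ) : ⌊(5 : ℝ) ^ m⌋₊ = 5 ^ m := by exact_mod_cast Nat.floor_natCast (5 ^ m)
  simp [partitionLimit, this, (hE.partition _).eq_one]

theorem strictMonoOn_partitionLimit (hE : IsNestedQuinaryPartition E) :
    StrictMonoOn (partitionLimit E) (Icc 0 1) := by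
  intro x hx y hy hxy
  obtain ⟨m, hm⟩ := exists_pow_lt_of_lt_one (by linarith : 0 < (y - x) / 2)
    (by norm_num : (1 / 5 : ℝ) < 1)
  have h5 : (5 : ℝ) ^ m * (1 / 5) ^ m = 1 := by rw [← mul_pow]; norm_num
  have hgap : 5 ^ m * x + 2 < 5 ^ m * y := by nlinarith [pow_pos (by norm_num : (0 : ℝ) < 5) m]
  have hfloor : ⌊5 ^ m * x⌋₊ + 2 ≤ ⌊5 ^ m * y⌋₊ := Nat.le_floor <| by
    push_cast
    linarith [Nat.floor_le (mul_nonneg (by positivity) hx.1 : 0 ≤ 5 ^ m * x)]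
  have hy1 : ⌊5 ^ m * y⌋₊ ≤ 5 ^ m := Nat.floor_le_of_le <| by
    push_cast
    nlinarith [hy.2, pow_pos (by norm_num : (0 : ℝ) < 5) m]
  calc partitionLimit E x ≤ E m (⌊5 ^ m * x⌋₊ + 1) := hE.partitionLimit_le x m
    _ < E m (⌊5 ^ m * x⌋₊ + 1 + 1) := (hE.partition m).lt_succ _ (by omega)
    _ ≤ E m ⌊5 ^ m * y⌋₊ := (hE.partition m).monotone hfloor
    _ ≤ partitionLimit E y := hE.le_partitionLimit y m

theorem strictMono_restrict (hE : IsNestedQuinaryPartition E) :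
    StrictMono hE.mapsTo_partitionLimit.restrict :=
  fun s t hst => hE.strictMonoOn_partitionLimit s.2 t.2 hst

theorem surjective_restrict (hE : IsNestedQuinaryPartition E) :
    Function.Surjective hE.mapsTo_partitionLimit.restrict := by
  intro z
  have := intermediate_value_Icc zero_le_one hE.continuous_partitionLimit.continuousOn
  rw [hE.partitionLimit_zero, hE.partitionLimit_one] at this
  obtain ⟨t, ht, htz⟩ := this z.2
  exact ⟨⟨t, ht⟩, Subtype.ext htz⟩

noncomputable def homeomorph (hE : IsNestedQuinaryPartition E) : unitInterval ≃ₜ unitInterval :=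
  (StrictMono.orderIsoOfSurjective _ hE.strictMono_restrict hE.surjective_restrict).toHomeomorph

theorem homeomorph_mem_Icc (hE : IsNestedQuinaryPartition E) {m j : ℕ} {t : unitInterval}
    (h : ⌊5 ^ m * (t : ℝ)⌋₊ = j) : (hE.homeomorph t : ℝ) ∈ Icc (E m j) (E m (j + 1)) :=
  h ▸ ⟨hE.le_partitionLimit t m, hE.partitionLimit_le t m⟩

end IsNestedQuinaryPartition

-- The reals whose base-`5` digit number `m + 1` is `2`, endpoints of the digit intervals excluded.
def middleFifths (m : ℕ) : Set ℝ :=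
  ⋃ k : ℕ, Ioo ((5 * k + 2 : ℝ) / 5 ^ (m + 1)) ((5 * k + 3 : ℝ) / 5 ^ (m + 1))

theorem floor_five_pow_mul_eq_of_mem_Ioo {m k : ℕ} {x : ℝ}
    (hx : x ∈ Ioo ((5 * k + 2 : ℝ) / 5 ^ (m + 1)) ((5 * k + 3 : ℝ) / 5 ^ (m + 1))) :
    ⌊5 ^ (m + 1) * x⌋₊ = 5 * k + 2 := by
  have h5 : (0 : ℝ) < 5 ^ (m + 1) := by positivity
  rw [mem_Ioo, div_lt_iff₀ h5, lt_div_iff₀ h5] at hx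
  rw [Nat.floor_eq_iff (by nlinarith [hx.1])]
  push_cast
  constructor <;> linarith [hx.1, hx.2]

theorem exists_mem_middleFifths_abs_sub_le (m : ℕ) {y : ℝ} (hy : y ∈ Icc 0 1) :
    ∃ z ∈ Icc (0 : ℝ) 1, z ∈ middleFifths m ∧ |z - y| ≤ 2 / 5 ^ m := by
  set k := ⌊(5 ^ m - 1) * y⌋₊
  have h5 : (1 : ℝ) ≤ 5 ^ m := one_le_pow₀ (by norm_num)
  have hk₁ : (k : ℝ) ≤ (5 ^ m - 1) * y := Nat.floor_le (mul_nonneg (by linarith) hy.1)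
  have hk₂ : (5 ^ m - 1) * y < k + 1 := Nat.lt_floor_add_one _
  have hky : (k : ℝ) ≤ 5 ^ m - 1 := by nlinarith [hy.2]
  have hz : (k + 1 / 2 : ℝ) / 5 ^ m = (5 * k + 5 / 2) / 5 ^ (m + 1) := by
    rw [pow_succ]
    field_simp
  refine ⟨(k + 1 / 2) / 5 ^ m, ⟨by positivity, (div_le_one (by positivity)).2 (by linarith)⟩,
    mem_iUnion.2 ⟨k, ?_, ?_⟩, ?_⟩
  · rw [hz]
    gcongr
    norm_num
  · rw [hz]
    gcongr
    norm_num
  · rw [show (k + 1 / 2 : ℝ) / 5 ^ m - y = (k + 1 / 2 - 5 ^ m * y) / 5 ^ m by field_simp,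
      abs_div, abs_of_pos (by positivity : (0 : ℝ) < 5 ^ m)]
    gcongr
    rw [abs_le]
    constructor <;> nlinarith [hy.1, hy.2]

section universal

variable (ι : Type*)

def middleCells (m : ℕ) : Set (ι → unitInterval) :=
  univ.pi fun _ => Subtype.val ⁻¹' middleFifths m

def offMiddleCellsFrom (N : ℕ) : Set (ι → unitInterval) :=
  ⋂ m ≥ N, (middleCells ι m)ᶜ

def universalMeagerSet : Set (ι → unitInterval) :=
  ⋃ N, offMiddleCellsFrom ι N

variable {ι} [Fintype ι]

theorem isOpen_middleCells (m : ℕ) : IsOpen (middleCells ι m) :=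
  isOpen_set_pi finite_univ fun _ _ =>
    (isOpen_iUnion fun _ => isOpen_Ioo).preimage continuous_subtype_val

theorem isClosed_offMiddleCellsFrom (N : ℕ) : IsClosed (offMiddleCellsFrom ι N) :=
  isClosed_biInter fun m _ => (isOpen_middleCells m).isClosed_compl

theorem exists_mem_middleCells_dist_le (m : ℕ) (y : ι → unitInterval) :
    ∃ z ∈ middleCells ι m, dist z y ≤ 2 / 5 ^ m := by
  choose z hz using fun i => exists_mem_middleFifths_abs_sub_le m (y i).2
  refine ⟨fun i => ⟨z i, (hz i).1⟩, fun i _ => (hz i).2.1,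
    (dist_pi_le_iff (by positivity)).2 fun i => ?_⟩
  rw [Subtype.dist_eq, Real.dist_eq]
  exact (hz i).2.2

theorem isNowhereDense_offMiddleCellsFrom (N : ℕ) : IsNowhereDense (offMiddleCellsFrom ι N) := by
  rw [(isClosed_offMiddleCellsFrom N).isNowhereDense_iff, eq_empty_iff_forall_notMem]
  intro y hy
  obtain ⟨ε, hε, hball⟩ := Metric.mem_nhds_iff.1 (mem_interior_iff_mem_nhds.1 hy)
  obtain ⟨m, hm⟩ := pow_unbounded_of_one_lt (2 / ε) (by norm_num : (1 : ℝ) < 5)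
  obtain ⟨z, hz, hzy⟩ := exists_mem_middleCells_dist_le (max N m) y
  have hclose : dist z y < ε := by
    refine hzy.trans_lt ((div_lt_iff₀ (by positivity)).2 ?_)
    calc 2 < ε * 5 ^ m := by rwa [div_lt_iff₀ hε, mul_comm] at hm
      _ ≤ ε * 5 ^ max N m := by gcongr <;> norm_num [le_max_right]
  exact mem_iInter₂.1 (hball hclose) (max N m) (le_max_left N m) hz

theorem isMeagre_universalMeagerSet : IsMeagre (universalMeagerSet ι) :=
  isMeagre_iUnion fun N => (isNowhereDense_offMiddleCellsFrom N).isMeagre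

theorem isFsigma_universalMeagerSet : IsFsigma (universalMeagerSet ι) :=
  ⟨offMiddleCellsFrom ι, isClosed_offMiddleCellsFrom, rfl⟩

end universal

theorem IsMeagre.exists_antitone_isOpen_dense {X : Type*} [TopologicalSpace X] [BaireSpace X]
    {B : Set X} (hB : IsMeagre B) :
    ∃ U : ℕ → Set X, Antitone U ∧ (∀ m, IsOpen (U m)) ∧ (∀ m, Dense (U m)) ∧
      B ⊆ ⋃ m, (U m)ᶜ := by
  obtain ⟨t, htB, htG, htd⟩ := mem_residual.1 hB
  obtain ⟨g, hgo, rfl⟩ := isGδ_iff_eq_iInter_nat.1 htG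
  refine ⟨fun m => ⋂ k ≤ m, g k,
    fun m m' h => biInter_subset_biInter_left fun k hk => le_trans hk h,
    fun m => (finite_le_nat m).isOpen_biInter fun k _ => hgo k,
    fun m => htd.mono (subset_iInter₂ fun k _ => iInter_subset g k), fun x hx => ?_⟩
  obtain ⟨k, hk⟩ : ∃ k, x ∉ g k := by simpa using fun h => htB h hx
  exact mem_iUnion.2 ⟨k, fun hxk => hk (mem_iInter₂.1 hxk k le_rfl)⟩

theorem exists_homeomorph_mapsTo_offMiddleCellsFrom {ι : Type*} [Fintype ι]
    {U : ℕ → Set (ι → unitInterval)} (hU : Antitone U) (hUo : ∀ m, IsOpen (U m))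
    (hUd : ∀ m, Dense (U m)) :
    ∃ h : (ι → unitInterval) ≃ₜ (ι → unitInterval),
      ∀ k, MapsTo h (U k)ᶜ (offMiddleCellsFrom ι k) := by
  obtain ⟨E, hE, hbox⟩ := exists_nested_partitions hUo hUd
  refine ⟨Homeomorph.piCongrRight fun i => (hE i).homeomorph.symm,
    fun k x hx => mem_iInter₂.2 fun m hm hmid => hx (hU hm ?_)⟩
  set y := Homeomorph.piCongrRight (fun i => (hE i).homeomorph.symm) x
  choose κ hκ using fun i => mem_iUnion.1 (hmid i (mem_univ i))
  have hfloor (i : ι) : ⌊5 ^ (m + 1) * (y i : ℝ)⌋₊ = 5 * κ i + 2 := floor_five_pow_mul_eq_of_mem_Ioo (hκ i)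
  have hκ_lt (i : ι) : κ i < 5 ^ m := by
    have : ⌊5 ^ (m + 1) * (y i : ℝ)⌋₊ ≤ 5 ^ (m + 1) := Nat.floor_le_of_le <| by
      push_cast
      nlinarith [(y i).2.2, pow_pos (by norm_num : (0 : ℝ) < 5) (m + 1)]
    rw [hfloor, pow_succ] at this
    omega
  refine hbox m κ hκ_lt fun i _ => ?_
  simpa [y] using (hE i).homeomorph_mem_Icc (hfloor i)

theorem exists_universal_meager_Fsigma_cube_general (n : ℕ) :
    ∃ A : Set (Cube n), IsMeagre A ∧ IsFsigma A ∧
      ∀ B : Set (Cube n), IsMeagre B →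
        ∃ h : Cube n ≃ₜ Cube n, h '' B ⊆ A := by
  refine ⟨universalMeagerSet (Fin n), isMeagre_universalMeagerSet, isFsigma_universalMeagerSet,
    fun B hB => ?_⟩
  obtain ⟨U, hU, hUo, hUd, hBU⟩ := hB.exists_antitone_isOpen_dense
  obtain ⟨h, hh⟩ := exists_homeomorph_mapsTo_offMiddleCellsFrom hU hUo hUd
  refine ⟨h, ?_⟩
  rintro _ ⟨x, hx, rfl⟩
  obtain ⟨k, hk⟩ := mem_iUnion.1 (hBU hx)
  exact mem_iUnion.2 ⟨k, hh k hk⟩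

/-- For every `n ≥ 1` the cube `Iⁿ` contains a universal meager `Fσ`-set: a meager
`Fσ`-set `A` such that every meager set `B` can be mapped into `A` by a homeomorphism
of `Iⁿ`. -/
theorem exists_universal_meager_Fsigma_cube (n : ℕ) (hn : 1 ≤ n) :
    ∃ A : Set (Cube n), IsMeagre A ∧ IsFsigma A ∧
      ∀ B : Set (Cube n), IsMeagre B →
        ∃ h : Cube n ≃ₜ Cube n, h '' B ⊆ A :=
  exists_universal_meager_Fsigma_cube_general n
end

section
/- A subset T of the Hilbert cube I^ω is a tame open set if and only if T = ⋃𝒯 for a suitable tame family 𝒯 of tame open balls in I^ω. -/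
open Set Topology

/-- The Hilbert cube `I^ω = ℕ → [0,1]` with the product topology. -/
abbrev HilbertCube : Type := ℕ → unitInterval

/-- A family `ℱ` of subsets of `X` is vanishing if for every open cover `𝒰` of `X`
the subfamily of members of `ℱ` not contained in any element of `𝒰` is locally finite. -/
def Vanishing {X : Type*} [TopologicalSpace X] (ℱ : Set (Set X)) : Prop :=
  ∀ 𝒰 : Set (Set X), (∀ u ∈ 𝒰, IsOpen u) → ⋃₀ 𝒰 = univ →
    LocallyFinite (fun F : {F : Set X // F ∈ ℱ ∧ ¬∃ u ∈ 𝒰, F ⊆ u} => F.1)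

/-- A tame open ball in the Hilbert cube: an open set `B` whose closure has an open
neighborhood `O` such that the pair `(O, closure B)` is homeomorphic to the pair
`(I^ω × [0,∞), I^ω × [0,1])`. -/
def IsTameOpenBall (B : Set HilbertCube) : Prop :=
  IsOpen B ∧ ∃ O : Set HilbertCube, IsOpen O ∧ closure B ⊆ O ∧
    ∃ e : O ≃ₜ HilbertCube × {t : ℝ // 0 ≤ t},
      ∀ x : O, (x : HilbertCube) ∈ closure B ↔ ((e x).2 : ℝ) ≤ 1

/-- A tame open set: the union of a vanishing family of tame open balls with pairwise
disjoint closures. -/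
def IsTameOpen (U : Set HilbertCube) : Prop :=
  ∃ 𝒰 : Set (Set HilbertCube), Vanishing 𝒰 ∧ (∀ B ∈ 𝒰, IsTameOpenBall B) ∧
    (𝒰.Pairwise fun B C => closure B ∩ closure C = ∅) ∧ U = ⋃₀ 𝒰

/-- A tame family: a vanishing family of nonempty open sets such that for any two distinct
members `U`, `V` either their closures are disjoint, or `closure U ⊆ V`, or `closure V ⊆ U`. -/
def IsTameFamily (𝒯 : Set (Set HilbertCube)) : Prop :=
  Vanishing 𝒯 ∧ (∀ U ∈ 𝒯, U.Nonempty ∧ IsOpen U) ∧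
    𝒯.Pairwise fun U V => closure U ∩ closure V = ∅ ∨ closure U ⊆ V ∨ closure V ⊆ U

/-!
The maximal members of a tame family `𝒯` of balls form the required disjoint family: a
vanishing family contains only finitely many sets through two given points, so every member of `𝒯` (open in a perfect space, hence with two points) lies in a
maximal one; and for distinct maximal members `closure V ⊆ W` would give `V ⊊ W`, so only the
disjointness alternative is left.
-/

lemma IsTameOpenBall.nonempty {B : Set HilbertCube} (hB : IsTameOpenBall B) : B.Nonempty := by
  obtain ⟨-, O, -, -, e, he⟩ := hB
  rw [← closure_nonempty_iff]
  refine ⟨e.symm (fun _ => 0, ⟨0, le_rfl⟩), (he _).2 ?_⟩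
  simp

lemma IsOpen.nontrivial_of_nonempty {X : Type*} [TopologicalSpace X] [PerfectSpace X]
    {U : Set X} (hU : IsOpen U) (hne : U.Nonempty) : U.Nontrivial := by
  obtain ⟨a, ha⟩ := hne
  rw [nontrivial_iff_ne_singleton ha]
  rintro rfl
  exact not_isOpen_singleton a hU

namespace Vanishing

variable {X : Type*} [TopologicalSpace X] {ℱ 𝒢 : Set (Set X)}

lemma mono (hℱ : Vanishing ℱ) (h𝒢 : 𝒢 ⊆ ℱ) : Vanishing 𝒢 := by
  intro 𝒰 hopen hcover
  have hinj : Function.Injective fun F : {F : Set X // F ∈ 𝒢 ∧ ¬∃ u ∈ 𝒰, F ⊆ u} =>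
      (⟨F.1, h𝒢 F.2.1, F.2.2⟩ : {F : Set X // F ∈ ℱ ∧ ¬∃ u ∈ 𝒰, F ⊆ u}) :=
    fun F G hFG => Subtype.ext (congrArg Subtype.val hFG :)
  exact (hℱ 𝒰 hopen hcover).comp_injective hinj

/-- Test against the open cover `{{a}ᶜ, {b}ᶜ}`: no member containing both `a` and `b` lies in
one of its elements, and local finiteness at `a` leaves only finitely many of them. -/
lemma finite_setOf_mem_and_mem [T1Space X] (hℱ : Vanishing ℱ) {a b : X} (hab : a ≠ b) :
    {F ∈ ℱ | a ∈ F ∧ b ∈ F}.Finite := by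
  set 𝒞 : Set (Set X) := {{a}ᶜ, {b}ᶜ}
  have hopen : ∀ u ∈ 𝒞, IsOpen u := by
    rintro u (rfl | rfl) <;> exact isOpen_compl_singleton
  have hcover : ⋃₀ 𝒞 = univ := by
    refine eq_univ_of_forall fun x => ?_
    rcases ne_or_eq x a with hx | rfl
    · exact ⟨{a}ᶜ, Or.inl rfl, hx⟩
    · exact ⟨{b}ᶜ, Or.inr rfl, hab⟩
  obtain ⟨N, hN, hfin⟩ := hℱ 𝒞 hopen hcover a
  refine (hfin.image Subtype.val).subset fun F ⟨hF, haF, hbF⟩ => ?_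
  have hnot : ¬∃ u ∈ 𝒞, F ⊆ u := by
    rintro ⟨u, (rfl | rfl), hFu⟩
    exacts [hFu haF rfl, hFu hbF rfl]
  exact ⟨⟨F, hF, hnot⟩, ⟨a, haF, mem_of_mem_nhds hN⟩, rfl⟩

lemma exists_superset_maximal [T1Space X] (hℱ : Vanishing ℱ) {U : Set X} (hU : U ∈ ℱ)
    (hU' : U.Nontrivial) : ∃ V, U ⊆ V ∧ Maximal (· ∈ ℱ) V := by
  obtain ⟨a, ha, b, hb, hab⟩ := hU'
  have hfin : {F ∈ ℱ | U ⊆ F}.Finite :=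
    (hℱ.finite_setOf_mem_and_mem hab).subset fun F ⟨hF, hUF⟩ => ⟨hF, hUF ha, hUF hb⟩
  obtain ⟨V, hUV, hV⟩ := hfin.exists_le_maximal ⟨hU, subset_rfl⟩
  exact ⟨V, hUV, hV.prop.1, fun W hW hVW => hV.2 ⟨hW, hUV.trans hVW⟩ hVW⟩

end Vanishing

namespace IsTameFamily

variable {𝒯 : Set (Set HilbertCube)}

lemma sUnion_setOf_maximal (h𝒯 : IsTameFamily 𝒯) :
    ⋃₀ {V | Maximal (· ∈ 𝒯) V} = ⋃₀ 𝒯 := by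
  refine (sUnion_subset_sUnion fun V hV => hV.prop).antisymm ?_
  rintro x ⟨U, hU, hxU⟩
  have hU' : U.Nontrivial := (h𝒯.2.1 U hU).2.nontrivial_of_nonempty (h𝒯.2.1 U hU).1
  obtain ⟨V, hUV, hV⟩ := h𝒯.1.exists_superset_maximal hU hU'
  exact ⟨V, hV, hUV hxU⟩

lemma pairwise_disjoint_closure_maximal (h𝒯 : IsTameFamily 𝒯) :
    {V | Maximal (· ∈ 𝒯) V}.Pairwise fun V W => closure V ∩ closure W = ∅ := by
  intro V hV W hW hVW
  rcases h𝒯.2.2 hV.prop hW.prop hVW with hdisj | hsub | hsub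
  · exact hdisj
  · exact absurd (hV.eq_of_subset hW.prop (subset_closure.trans hsub)) hVW
  · exact absurd (hW.eq_of_subset hV.prop (subset_closure.trans hsub)).symm hVW

end IsTameFamily

/-- A subset of the Hilbert cube is a tame open set if and only if it is the union of a
tame family of tame open balls. -/
theorem tameOpen_iff_union_tameFamily (T : Set HilbertCube) :
    IsTameOpen T ↔ ∃ 𝒯 : Set (Set HilbertCube), IsTameFamily 𝒯 ∧
      (∀ B ∈ 𝒯, IsTameOpenBall B) ∧ T = ⋃₀ 𝒯 := by
  constructor
  · rintro ⟨𝒰, hvan, hball, hdisj, rfl⟩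
    refine ⟨𝒰, ⟨hvan, fun B hB => ⟨(hball B hB).nonempty, (hball B hB).1⟩, ?_⟩, hball, rfl⟩
    exact hdisj.mono' fun _ _ h => Or.inl h
  · rintro ⟨𝒯, h𝒯, hball, rfl⟩
    refine ⟨{V | Maximal (· ∈ 𝒯) V}, h𝒯.1.mono fun V hV => hV.prop,
      fun B hB => hball B hB.prop, h𝒯.pairwise_disjoint_closure_maximal,
      h𝒯.sUnion_setOf_maximal.symm⟩
end

section
/- Every open subset V of the Hilbert cube I^ω contains a tame open set W ⊆ V that is dense in V. -/
open Set Topology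

/-!
A tame open ball arises from any homeomorphism `e : O ≃ₜ I^ω × [0,∞)` of an open set `O`: take
`B = e⁻¹(I^ω × [0,1))`, whose closure is the compact set `e⁻¹(I^ω × [0,1])`. Such an `O` fits
inside every nonempty open set: if the sup-norm ball `B(m, r) ⊆ [0,1]ⁿ` constrains the first `n`
coordinates enough, take `O = {x | xₙ < g(x|ₙ)}` with `g = r - d(·, m)`. The fibrewise map
`t ↦ t / (g - t)` gives `O ≅ B(m, r) × [0,∞) × I^ω ≅ ℝⁿ × [0,∞) × I^ω`; a shear turns
`[0,∞) × ℝⁿ` into `[0,∞) × [0,1]ⁿ`, and the factor `[0,1]ⁿ` is absorbed into `I^ω`.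

The dense tame open set is then built greedily along a countable basis `(fₖ)`: at stage `k` pick
a ball of radius `< 1/(k+1)` whose closure lies in `fₖ ∩ V` minus the closures of the earlier
balls, if there is room. Disjointness and density are immediate, and since the radii tend to `0`,
a Lebesgue number of any open cover shows that the family is vanishing.
-/

open Metric Filter TopologicalSpace
open scoped NNReal unitInterval

section

variable {X : Type*}

theorem vanishing_of_subset_ball [PseudoMetricSpace X] [CompactSpace X] {ℱ : Set (Set X)}
    {P : ℕ → Set X} {r : ℕ → ℝ} (hr : Tendsto r atTop (𝓝 0)) (hℱ : ℱ ⊆ range P)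
    (hP : ∀ k, ∀ x ∈ P k, P k ⊆ ball x (r k)) : Vanishing ℱ := by
  intro 𝒰 h𝒰 hcover
  obtain ⟨δ, hδ, hleb⟩ := lebesgue_number_lemma_of_metric_sUnion isCompact_univ h𝒰 hcover.ge
  obtain ⟨K, hK⟩ := eventually_atTop.1 (hr.eventually (gt_mem_nhds hδ))
  have hbad : {F | F ∈ ℱ ∧ ¬∃ u ∈ 𝒰, F ⊆ u} ⊆ insert ∅ (P '' Iio K) := by
    rintro _ ⟨hF, hnot⟩
    obtain ⟨k, rfl⟩ := hℱ hF
    rcases (P k).eq_empty_or_nonempty with hk | ⟨x, hx⟩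
    · exact Or.inl hk
    refine Or.inr ⟨k, mem_Iio.2 (not_le.1 fun hKk => hnot ?_), rfl⟩
    obtain ⟨u, hu, hxu⟩ := hleb x (mem_univ x)
    exact ⟨u, hu, (hP k x hx).trans ((ball_subset_ball (hK k hKk).le).trans hxu)⟩
  have : Finite {F // F ∈ ℱ ∧ ¬∃ u ∈ 𝒰, F ⊆ u} :=
    (((finite_Iio K).image P).insert ∅ |>.subset hbad).to_subtype
  exact locallyFinite_of_finite _

variable [TopologicalSpace X]

def greedyUnion (next : ℕ → Set X → Set X) : ℕ → Set X
  | 0 => ∅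
  | k + 1 => greedyUnion next k ∪ closure (next k (greedyUnion next k))

lemma isClosed_greedyUnion (next : ℕ → Set X → Set X) (k : ℕ) :
    IsClosed (greedyUnion next k) := by
  induction k with
  | zero => exact isClosed_empty
  | succ k ih => exact ih.union isClosed_closure

lemma closure_subset_greedyUnion (next : ℕ → Set X → Set X) {j k : ℕ} (hjk : j < k) :
    closure (next j (greedyUnion next j)) ⊆ greedyUnion next k :=
  subset_union_right.trans <|
    monotone_nat_of_le_succ (fun _ => subset_union_left) (f := greedyUnion next) hjk

lemma greedyUnion_subset_closure_iUnion (next : ℕ → Set X → Set X) (k : ℕ) :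
    greedyUnion next k ⊆ closure (⋃ j, next j (greedyUnion next j)) := by
  induction k with
  | zero => exact empty_subset _
  | succ k ih => exact union_subset ih (closure_mono (subset_iUnion_of_subset k subset_rfl))

end

section

variable {X : Type*} [PseudoMetricSpace X] {p : Set X → Prop}

lemma exists_small_closure_subset_sdiff
    (hp : ∀ U, IsOpen U → U.Nonempty → ∃ B, p B ∧ B.Nonempty ∧ closure B ⊆ U)
    {U F : Set X} (hU : IsOpen U) (hF : IsClosed F) {r : ℝ} (hr : 0 < r) :
    ∃ B, (B.Nonempty → p B) ∧ closure B ⊆ U \ F ∧ (∀ x ∈ B, B ⊆ ball x r) ∧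
      ((U \ F).Nonempty → B.Nonempty) := by
  rcases (U \ F).eq_empty_or_nonempty with hUF | ⟨z, hz⟩
  · exact ⟨∅, by simp, by simp, by simp, by simp [hUF]⟩
  obtain ⟨B, hpB, hBne, hBsub⟩ :=
    hp _ ((hU.sdiff hF).inter isOpen_ball) ⟨z, hz, mem_ball_self (half_pos hr)⟩
  have hBz : B ⊆ ball z (r / 2) := subset_closure.trans (hBsub.trans inter_subset_right)
  refine ⟨B, fun _ => hpB, hBsub.trans inter_subset_left, fun x hx => ?_, fun _ => hBne⟩
  exact hBz.trans (ball_subset_ball' (by linarith [mem_ball'.1 (hBz hx)]))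

theorem exists_seq_disjoint_closure [SecondCountableTopology X]
    (hp : ∀ U, IsOpen U → U.Nonempty → ∃ B, p B ∧ B.Nonempty ∧ closure B ⊆ U)
    {V : Set X} (hV : IsOpen V) :
    ∃ P : ℕ → Set X, (∀ k, (P k).Nonempty → p (P k)) ∧ (∀ k, P k ⊆ V) ∧
      Pairwise (fun j k => Disjoint (closure (P j)) (closure (P k))) ∧
      (∀ k, ∀ x ∈ P k, P k ⊆ ball x (1 / (k + 1))) ∧ V ⊆ closure (⋃ k, P k) := by
  obtain ⟨b, hbc, -, hb⟩ := exists_countable_basis X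
  -- `∅` is added only so that the family can be enumerated even when `X` is empty.
  obtain ⟨f, hf⟩ := (hbc.insert ∅).exists_eq_range (insert_nonempty _ _)
  have hfo (k : ℕ) : IsOpen (f k) := by
    rcases (hf ▸ mem_range_self k : f k ∈ insert ∅ b) with h | h
    exacts [h ▸ isOpen_empty, hb.isOpen h]
  choose! next hnext using fun k (F : Set X) (hF : IsClosed F) =>
    exists_small_closure_subset_sdiff hp ((hfo k).inter hV) hF (r := 1 / (k + 1)) (by positivity)
  have hF := isClosed_greedyUnion next
  set W := ⋃ k, next k (greedyUnion next k)
  refine ⟨fun k => next k (greedyUnion next k), fun k => (hnext k _ (hF k)).1,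
    fun k => subset_closure.trans ((hnext k _ (hF k)).2.1.trans fun x hx => hx.1.2),
    (pairwise_disjoint_on _).2 fun j k hjk => ?_, fun k => (hnext k _ (hF k)).2.2.1, ?_⟩
  · exact disjoint_of_subset_left (closure_subset_greedyUnion next hjk)
      (disjoint_compl_right.mono_right ((hnext k _ (hF k)).2.1.trans fun x hx => hx.2))
  intro v hv
  by_contra hvW
  obtain ⟨t, htb, hvt, htsub⟩ :=
    hb.exists_subset_of_mem_open (a := v) (u := V \ closure W) ⟨hv, hvW⟩ (hV.sdiff isClosed_closure)
  obtain ⟨k, rfl⟩ : t ∈ range f := hf ▸ mem_insert_of_mem _ htb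
  have hvk : v ∉ greedyUnion next k := fun h => hvW (greedyUnion_subset_closure_iUnion next k h)
  obtain ⟨w, hw⟩ := (hnext k _ (hF k)).2.2.2 ⟨v, ⟨hvt, hv⟩, hvk⟩
  have hwf : w ∈ f k := ((hnext k _ (hF k)).2.1 (subset_closure hw)).1.1
  exact (htsub hwf).2 (subset_closure (mem_iUnion.2 ⟨k, hw⟩))

theorem exists_vanishing_dense_family [CompactSpace X]
    (hp : ∀ U, IsOpen U → U.Nonempty → ∃ B, p B ∧ B.Nonempty ∧ closure B ⊆ U)
    {V : Set X} (hV : IsOpen V) :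
    ∃ 𝒰 : Set (Set X), Vanishing 𝒰 ∧ (∀ B ∈ 𝒰, p B) ∧
      𝒰.Pairwise (fun B C => closure B ∩ closure C = ∅) ∧ ⋃₀ 𝒰 ⊆ V ∧ V ⊆ closure (⋃₀ 𝒰) := by
  obtain ⟨P, hpP, hPV, hdisj, hsmall, hdense⟩ := exists_seq_disjoint_closure hp hV
  refine ⟨{B ∈ range P | B.Nonempty},
    vanishing_of_subset_ball tendsto_one_div_add_atTop_nhds_zero_nat (fun _ hB => hB.1) hsmall,
    ?_, ?_, ?_, ?_⟩
  · rintro _ ⟨⟨k, rfl⟩, hk⟩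
    exact hpP k hk
  · rintro _ ⟨⟨j, rfl⟩, -⟩ _ ⟨⟨k, rfl⟩, -⟩ hjk
    exact disjoint_iff_inter_eq_empty.1 (hdisj fun h => hjk (h ▸ rfl))
  · rintro x ⟨_, ⟨⟨k, rfl⟩, -⟩, hx⟩
    exact hPV k hx
  · refine hdense.trans (closure_mono (iUnion_subset fun k x hx => ?_))
    exact ⟨P k, ⟨⟨k, rfl⟩, x, hx⟩, hx⟩

end

noncomputable def strictSubgraphHomeomorph {Y : Type*} [TopologicalSpace Y] {g : Y → ℝ}
    (hg : Continuous g) (hg1 : ∀ y, g y ≤ 1) :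
    {q : Y × I // (q.2 : ℝ) < g q.1} ≃ₜ {y // 0 < g y} × ℝ≥0 where
  toFun q := (⟨q.1.1, q.1.2.2.1.trans_lt q.2⟩,
    ⟨q.1.2 / (g q.1.1 - q.1.2), div_nonneg q.1.2.2.1 (sub_pos.2 q.2).le⟩)
  invFun p := ⟨(p.1, ⟨g p.1 * p.2 / (1 + p.2), by
      have := p.1.2; have := hg1 p.1; constructor
      · positivity
      · rw [div_le_one (by positivity)]; nlinarith [p.2.2]⟩), by
      show g p.1 * p.2 / (1 + p.2) < g p.1
      rw [div_lt_iff₀ (by positivity)]; nlinarith [p.1.2]⟩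
  left_inv q := by
    obtain ⟨⟨y, t⟩, ht⟩ := q
    have : g y - t ≠ 0 := (sub_pos.2 ht).ne'
    have : g y ≠ 0 := (t.2.1.trans_lt ht).ne'
    ext
    · rfl
    · show g y * (t / (g y - t)) / (1 + t / (g y - t)) = t
      field_simp
      rw [sub_add_cancel, mul_div_cancel_left₀ _ this]
  right_inv p := by
    obtain ⟨⟨y, hy⟩, s⟩ := p
    have : g y ≠ 0 := hy.ne'
    ext
    · rfl
    · show g y * s / (1 + s) / (g y - g y * s / (1 + s)) = s
      field_simp; ring
  continuous_toFun := by fun_prop (disch := exact fun q => (sub_pos.2 q.2).ne')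
  continuous_invFun := by fun_prop (disch := exact fun p => by positivity)

/-- The shear `(a, b) ↦ (a + (‖b‖ - ρ)⁺, b)` maps `ℝ≥0 × E` onto `{(p, b) | ‖b‖ ≤ p + ρ}`, which
the fibrewise rescaling `b ↦ c + (ρ / (p + ρ)) • b` maps onto `ℝ≥0 × closedBall c ρ`. -/
noncomputable def nnrealProdHomeomorphClosedBall {E : Type*} [NormedAddCommGroup E]
    [NormedSpace ℝ E] (c : E) {ρ : ℝ} (hρ : 0 < ρ) : ℝ≥0 × E ≃ₜ ℝ≥0 × closedBall c ρ where
  toFun q := (q.1 + (‖q.2‖ - ρ).toNNReal,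
    ⟨c + (ρ / (↑(q.1 + (‖q.2‖ - ρ).toNNReal) + ρ)) • q.2, by
      rw [mem_closedBall, dist_eq_norm, add_sub_cancel_left, norm_smul,
        Real.norm_of_nonneg (by positivity), div_mul_eq_mul_div, div_le_iff₀ (by positivity)]
      have := Real.le_coe_toNNReal (‖q.2‖ - ρ)
      push_cast
      nlinarith [q.1.2]⟩)
  invFun q :=
    (q.1 - (‖((q.1 + ρ) / ρ) • (q.2.1 - c)‖ - ρ).toNNReal, ((q.1 + ρ) / ρ) • (q.2.1 - c))
  left_inv q := by
    obtain ⟨a, b⟩ := q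
    have hb : ((↑(a + (‖b‖ - ρ).toNNReal) + ρ) / ρ) •
        (c + (ρ / (↑(a + (‖b‖ - ρ).toNNReal) + ρ)) • b - c) = b := by
      rw [add_sub_cancel_left, smul_smul, div_mul_div_comm, mul_comm ρ,
        div_self (by positivity), one_smul]
    simp only [hb, add_tsub_cancel_right]
  right_inv q := by
    obtain ⟨p, y, hy⟩ := q
    set b := ((p + ρ) / ρ) • (y - c)
    have hle : (‖b‖ - ρ).toNNReal ≤ p := by
      rw [Real.toNNReal_le_iff_le_coe, sub_le_iff_le_add, norm_smul,
        Real.norm_of_nonneg (by positivity), div_mul_eq_mul_div, div_le_iff₀ hρ]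
      rw [mem_closedBall, dist_eq_norm] at hy
      nlinarith [p.2]
    have hp : p - (‖b‖ - ρ).toNNReal + (‖b‖ - ρ).toNNReal = p := tsub_add_cancel_of_le hle
    refine Prod.ext hp (Subtype.ext ?_)
    change c + (ρ / (↑(p - (‖b‖ - ρ).toNNReal + (‖b‖ - ρ).toNNReal) + ρ)) • b = y
    rw [hp, smul_smul, div_mul_div_comm, mul_comm ρ, div_self (by positivity), one_smul,
      add_sub_cancel]
  continuous_toFun := by fun_prop (disch := exact fun q => by positivity)
  continuous_invFun := by fun_prop

def unitCubeHomeomorphClosedBall (n : ℕ) :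
    (Fin n → I) ≃ₜ closedBall (fun _ : Fin n => (2⁻¹ : ℝ)) 2⁻¹ where
  toFun y := ⟨fun i => y i, mem_closedBall.2 <| (dist_pi_le_iff (by norm_num)).2 fun i => by
    rw [Real.dist_eq, abs_le]; constructor <;> linarith [(y i).2.1, (y i).2.2]⟩
  invFun z := fun i => ⟨z.1 i, by
    have := abs_le.1 ((Real.dist_eq _ _).symm.trans_le
      ((dist_le_pi_dist z.1 _ i).trans (mem_closedBall.1 z.2)))
    constructor <;> linarith⟩
  left_inv _ := rfl
  right_inv _ := rfl
  continuous_toFun := by fun_prop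
  continuous_invFun := continuous_pi fun i =>
    ((continuous_apply i).comp continuous_subtype_val).subtype_mk _

def Homeomorph.subtypeProdFst {A B : Type*} [TopologicalSpace A] [TopologicalSpace B]
    (P : A → Prop) : {q : A × B // P q.1} ≃ₜ {a // P a} × B where
  toFun q := (⟨q.1.1, q.2⟩, q.1.2)
  invFun q := ⟨(q.1, q.2), q.1.2⟩
  left_inv _ := rfl
  right_inv _ := rfl

noncomputable def cubeBallHomeomorph {n : ℕ} {m : Fin n → ℝ} {r : ℝ} (hr : 0 < r)
    (hm : ball m r ⊆ closedBall (fun _ => 2⁻¹) 2⁻¹) :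
    {y : Fin n → I // 0 < r - dist (fun i => (y i : ℝ)) m} ≃ₜ (Fin n → ℝ) :=
  ((unitCubeHomeomorphClosedBall n).subtype
    (q := fun z : closedBall (fun _ : Fin n => (2⁻¹ : ℝ)) 2⁻¹ => (z : Fin n → ℝ) ∈ ball m r)
    fun y => by rw [sub_pos, mem_ball]; rfl).trans <|
  (IsEmbedding.subtypeVal.homeomorphOfSubsetRange (by rwa [Subtype.range_coe])).trans <|
  (Homeomorph.setCongr (OpenPartialHomeomorph.univBall_target m hr)).symm.trans <|
  (OpenPartialHomeomorph.univBall m r).toHomeomorphSourceTarget.symm.trans <|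
  (Homeomorph.setCongr (OpenPartialHomeomorph.univBall_source m r)).trans (Homeomorph.Set.univ _)

noncomputable def HilbertCube.splitFin (n : ℕ) : HilbertCube ≃ₜ (Fin n → I) × HilbertCube :=
  (Homeomorph.piCongrLeft (Y := fun _ => I) (finSumNatEquiv n)).symm.trans
    Homeomorph.sumArrowHomeomorphProdArrow

noncomputable def HilbertCube.splitHead : HilbertCube ≃ₜ I × HilbertCube :=
  (splitFin 1).trans ((Homeomorph.funUnique (Fin 1) I).prodCongr (.refl _))

theorem HilbertCube.nonempty_homeomorph_prod_nnreal {n : ℕ} {m : Fin n → ℝ} {r : ℝ}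
    (hr : 0 < r) (hr1 : r ≤ 1) (hm : ball m r ⊆ closedBall (fun _ => 2⁻¹) 2⁻¹) :
    Nonempty ({x : HilbertCube | (x n : ℝ) < r - dist (fun i : Fin n => (x i : ℝ)) m} ≃ₜ
      HilbertCube × ℝ≥0) := by
  let g : (Fin n → I) → ℝ := fun y => r - dist (fun i => (y i : ℝ)) m
  have hg1 (y : Fin n → I) : g y ≤ 1 := by
    linarith [dist_nonneg (x := fun i => (y i : ℝ)) (y := m)]
  let split : HilbertCube ≃ₜ ((Fin n → I) × I) × HilbertCube :=
    (splitFin n).trans <| ((Homeomorph.refl _).prodCongr splitHead).trans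
      (Homeomorph.prodAssoc _ _ _).symm
  exact ⟨(split.subtype (q := fun p => (p.1.2 : ℝ) < g p.1.1) fun _ => Iff.rfl).trans <|
    (Homeomorph.subtypeProdFst _).trans <|
    ((strictSubgraphHomeomorph (by fun_prop) hg1).prodCongr (.refl _)).trans <|
    ((((cubeBallHomeomorph hr hm).prodCongr (.refl _)).trans
      (Homeomorph.prodComm _ _)).prodCongr (.refl _)).trans <|
    ((nnrealProdHomeomorphClosedBall _ (by norm_num : (0 : ℝ) < 2⁻¹)).prodCongr (.refl _)).trans <|
    (((Homeomorph.refl _).prodCongr (unitCubeHomeomorphClosedBall n).symm).prodCongr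
      (.refl _)).trans <|
    (Homeomorph.prodAssoc _ _ _).trans <|
    ((Homeomorph.refl _).prodCongr (splitFin n).symm).trans (Homeomorph.prodComm _ _)⟩

theorem HilbertCube.exists_ball_preimage_subset {U : Set HilbertCube} (hU : IsOpen U)
    (hne : U.Nonempty) : ∃ n, ∃ m : Fin n → ℝ, ∃ r, 0 < r ∧ r ≤ 1 ∧
      ball m r ⊆ closedBall (fun _ => 2⁻¹) 2⁻¹ ∧
      {x : HilbertCube | (fun i : Fin n => (x i : ℝ)) ∈ ball m r} ⊆ U := by
  obtain ⟨x, hx⟩ := hne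
  obtain ⟨s, u, hu, hsU⟩ := isOpen_pi_iff.1 hU x hx
  choose! v hv hvu using fun a ha => isOpen_induced_iff.1 (hu a ha).1
  set n := s.sup id + 1
  have hsn (a : ℕ) (ha : a ∈ s) : a < n := Nat.lt_succ_of_le (Finset.le_sup (f := id) ha)
  set A : Set (Fin n → ℝ) := Set.pi {i | (i : ℕ) ∈ s} fun i => v i
  have hA : IsOpen A := isOpen_set_pi (toFinite _) fun i hi => hv i hi
  have hxA : (fun i : Fin n => (x i : ℝ)) ∈ A := fun i hi =>
    (hvu i hi ▸ (hu i hi).2 : x i ∈ Subtype.val ⁻¹' v i)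
  have hxK : (fun i : Fin n => (x i : ℝ)) ∈ closure (ball (fun _ => 2⁻¹) 2⁻¹) := by
    rw [closure_ball _ (by norm_num)]
    exact (unitCubeHomeomorphClosedBall n fun i => x i).2
  -- The point `x|ₙ` may lie on the boundary of the cube, so move to an interior point `z`.
  obtain ⟨z, hzA, hzK⟩ := mem_closure_iff.1 hxK A hA hxA
  obtain ⟨ε, hε, hεsub⟩ := Metric.isOpen_iff.1 (hA.inter isOpen_ball) z ⟨hzA, hzK⟩
  have hsub : ball z (min ε 1) ⊆ A ∩ ball (fun _ => 2⁻¹) 2⁻¹ :=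
    (ball_subset_ball (min_le_left _ _)).trans hεsub
  refine ⟨n, z, min ε 1, lt_min hε one_pos, min_le_right _ _,
    hsub.trans (inter_subset_right.trans ball_subset_closedBall), fun y hy => hsU fun a ha => ?_⟩
  rw [← hvu a ha]
  exact (hsub hy).1 ⟨a, hsn a ha⟩ ha

theorem closure_image_preimage_prod_Iio {X K : Type*} [TopologicalSpace X] [T2Space X]
    [TopologicalSpace K] [CompactSpace K] {O : Set X} (e : O ≃ₜ K × ℝ≥0) {a : ℝ≥0}
    (ha : 0 < a) :
    closure (((↑) : O → X) '' (e ⁻¹' (univ ×ˢ Iio a))) = (↑) '' (e ⁻¹' (univ ×ˢ Iic a)) := by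
  refine subset_antisymm (closure_minimal (image_mono (preimage_mono
    (prod_mono subset_rfl Iio_subset_Iic_self))) ?_) ?_
  · rw [← e.image_symm]
    exact ((isCompact_univ.prod (Icc_bot (a := a) ▸ isCompact_Icc)).image
      e.symm.continuous).image continuous_subtype_val |>.isClosed
  · have : univ ×ˢ Iic a = closure (univ ×ˢ Iio a : Set (K × ℝ≥0)) := by
      rw [closure_prod_eq, closure_univ, closure_Iio' (show (Iio a).Nonempty from ⟨0, ha⟩)]
    rw [this, e.preimage_closure]
    exact image_closure_subset_closure_image continuous_subtype_val

theorem exists_tameOpenBall_of_homeomorph {O : Set HilbertCube} (hO : IsOpen O)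
    (e : O ≃ₜ HilbertCube × ℝ≥0) : ∃ B, IsTameOpenBall B ∧ B.Nonempty ∧ closure B ⊆ O := by
  have hcl := closure_image_preimage_prod_Iio e one_pos
  refine ⟨_, ⟨hO.isOpenMap_subtype_val _ ((isOpen_univ.prod isOpen_Iio).preimage e.continuous),
    O, hO, hcl ▸ Subtype.coe_image_subset _ _, e, fun x => ?_⟩, ⟨e.symm (fun _ => 0, 0), ?_⟩,
    hcl ▸ Subtype.coe_image_subset _ _⟩
  · rw [hcl, Subtype.val_injective.mem_set_image]
    simp only [mem_preimage, mem_prod, mem_univ, true_and, mem_Iic]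
    exact NNReal.coe_le_one.symm
  · simp [e.apply_symm_apply]

theorem exists_tameOpenBall_closure_subset {U : Set HilbertCube} (hU : IsOpen U)
    (hne : U.Nonempty) : ∃ B, IsTameOpenBall B ∧ B.Nonempty ∧ closure B ⊆ U := by
  obtain ⟨n, m, r, hr, hr1, hm, hmU⟩ := HilbertCube.exists_ball_preimage_subset hU hne
  obtain ⟨e⟩ := HilbertCube.nonempty_homeomorph_prod_nnreal hr hr1 hm
  obtain ⟨B, hB, hBne, hBO⟩ :=
    exists_tameOpenBall_of_homeomorph (isOpen_lt (by fun_prop) (by fun_prop)) e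
  refine ⟨B, hB, hBne, hBO.trans fun x hx => hmU ?_⟩
  exact mem_ball.2 (sub_pos.1 ((x n).2.1.trans_lt hx))

/-- Every open subset of the Hilbert cube contains a dense tame open set. -/
theorem exists_dense_tameOpen (V : Set HilbertCube) (hV : IsOpen V) :
    ∃ W : Set HilbertCube, IsTameOpen W ∧ W ⊆ V ∧ V ⊆ closure W := by
  let _ := metrizableSpaceMetric HilbertCube
  obtain ⟨𝒰, hvan, htame, hdisj, hWV, hVW⟩ :=
    exists_vanishing_dense_family (fun _ => exists_tameOpenBall_closure_subset) hV
  exact ⟨⋃₀ 𝒰, ⟨𝒰, hvan, htame, hdisj, rfl⟩, hWV, hVW⟩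
end

section
/- For every dense Gδ-set G ⊆ [0,1], the countable power G^ω = {x ∈ I^ω : x(n) ∈ G for all n ∈ ℕ} is not a tame Gδ-set in the Hilbert cube I^ω. -/
open Set Topology

/-- The family of connected components of a subset `U` (connected components of the
subspace `U`, viewed as subsets of the ambient space). -/
def componentsOf {X : Type*} [TopologicalSpace X] (U : Set X) : Set (Set X) :=
  {C | ∃ x ∈ U, C = connectedComponentIn U x}

/-- A tame `Gδ`-set: the intersection of a decreasing sequence `(U n)` of tame open sets
such that the family of all connected components of all the `U n` is vanishing and the
closure of each connected component of `U (n+1)` is contained in some connected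
component of `U n`. -/
def IsTameGδ (G : Set HilbertCube) : Prop :=
  ∃ U : ℕ → Set HilbertCube, (∀ n, IsTameOpen (U n)) ∧ (∀ n, U (n + 1) ⊆ U n) ∧
    Vanishing (⋃ n, componentsOf (U n)) ∧
    (∀ n, ∀ C ∈ componentsOf (U (n + 1)), ∃ D ∈ componentsOf (U n), closure C ⊆ D) ∧
    G = ⋂ n, U n

/-!
Already the first tame open set `U₀ = ⋃ 𝒰` of such a sequence cannot contain `G^ω`. The sets
`int (cl B)`, `B ∈ 𝒰`, are disjoint open proper subsets of the connected cube, so the closed set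
`E` they miss is nonempty, and `E` is disjoint from `G^ω`. Baire's theorem on the compact set `E`
yields `e ∈ E`, a coordinate `k` and an open dense `O ⊇ G` such that `x k ∉ O` for all `x ∈ E`
near `e`. In a small box `N ∋ e` every slice `{x ∈ N | x k = t}` with `t ∈ O` is connected and
misses `E`, hence lies in the closure of a single ball. These balls span a free coordinate of the
box, so by vanishing there are only finitely many of them; since `O` is dense their closures then
cover the connected box `N`, which therefore lies in one `cl B`. So `e ∈ int (cl B)`, contradicting
`e ∈ E`.
-/

open Function

section Connected

variable {X ι : Type*} {s : Set X} {I : Set ι} {u : ι → Set X} {i : ι}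

theorem subset_union_biUnion_diff_singleton (hi : i ∈ I) (hsub : s ⊆ ⋃ j ∈ I, u j) :
    s ⊆ u i ∪ ⋃ j ∈ I \ {i}, u j := by
  rwa [← biUnion_insert, insert_sdiff_singleton, insert_eq_of_mem hi]

theorem Set.PairwiseDisjoint.disjoint_biUnion_diff_singleton (hd : I.PairwiseDisjoint u)
    (hi : i ∈ I) : Disjoint (u i) (⋃ j ∈ I \ {i}, u j) :=
  disjoint_iUnion₂_right.2 fun _ hj => hd hi hj.1 fun h => hj.2 h.symm

variable [TopologicalSpace X]

theorem Set.Pairwise.pairwiseDisjoint_closure {𝒰 : Set (Set X)}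
    (h : 𝒰.Pairwise fun B C => closure B ∩ closure C = ∅) : 𝒰.PairwiseDisjoint closure :=
  fun _ hB _ hC hBC => disjoint_iff_inter_eq_empty.2 (h hB hC hBC)

theorem IsPreconnected.exists_subset_of_subset_biUnion_of_isOpen (hs : IsPreconnected s)
    (hne : s.Nonempty) (hu : ∀ i ∈ I, IsOpen (u i)) (hd : I.PairwiseDisjoint u)
    (hsub : s ⊆ ⋃ i ∈ I, u i) : ∃ i ∈ I, s ⊆ u i := by
  obtain ⟨x, hx⟩ := hne
  obtain ⟨i, hi, hxi⟩ := mem_iUnion₂.1 (hsub hx)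
  exact ⟨i, hi, hs.subset_left_of_subset_union (hu i hi)
    (isOpen_biUnion fun j hj => hu j hj.1) (hd.disjoint_biUnion_diff_singleton hi)
    (subset_union_biUnion_diff_singleton hi hsub) ⟨x, hx, hxi⟩⟩

theorem IsPreconnected.exists_subset_of_subset_biUnion_of_isClosed (hs : IsPreconnected s)
    (hne : s.Nonempty) (hI : I.Finite) (hu : ∀ i ∈ I, IsClosed (u i))
    (hd : I.PairwiseDisjoint u) (hsub : s ⊆ ⋃ i ∈ I, u i) : ∃ i ∈ I, s ⊆ u i := by
  obtain ⟨x, hx⟩ := hne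
  obtain ⟨i, hi, hxi⟩ := mem_iUnion₂.1 (hsub hx)
  have hrest : Disjoint (u i) (⋃ j ∈ I \ {i}, u j) :=
    hd.disjoint_biUnion_diff_singleton hi
  refine ⟨i, hi, (isPreconnected_iff_subset_of_disjoint_closed.1 hs _ _ (hu i hi)
    ((hI.sdiff).isClosed_biUnion fun j hj => hu j hj.1)
    (subset_union_biUnion_diff_singleton hi hsub) ?_).resolve_right fun h => ?_⟩
  · rw [hrest.inter_eq, inter_empty]
  · exact hrest.ne_of_mem hxi (h hx) rfl

theorem exists_forall_notMem_interior_closure [PreconnectedSpace X] [Nonempty X]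
    {𝒰 : Set (Set X)} (hne : ∀ B ∈ 𝒰, closure B ≠ univ)
    (hdisj : 𝒰.Pairwise fun B C => closure B ∩ closure C = ∅) :
    ∃ x, ∀ B ∈ 𝒰, x ∉ interior (closure B) := by
  by_contra! h
  obtain ⟨B, hB, hBu⟩ := isPreconnected_univ.exists_subset_of_subset_biUnion_of_isOpen
    univ_nonempty (fun _ _ => isOpen_interior)
    (hdisj.pairwiseDisjoint_closure.mono fun _ => interior_subset) fun x _ =>
      let ⟨B, hB, hxB⟩ := h x
      mem_biUnion hB hxB
  exact hne B hB (univ_subset_iff.1 (hBu.trans interior_subset))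

theorem isPreconnected_set_pi {Y : ι → Type*} [∀ i, TopologicalSpace (Y i)]
    [∀ i, PreconnectedSpace (Y i)] {V : ∀ i, Set (Y i)} (hV : ∀ i ∈ I, IsPreconnected (V i)) :
    IsPreconnected (I.pi V) := by
  classical
  rw [← univ_pi_ite]
  refine isPreconnected_univ_pi fun i => ?_
  split_ifs with hi
  exacts [hV i hi, isPreconnected_univ]

end Connected

theorem unitInterval.isPreconnected_ball (c : unitInterval) (r : ℝ) :
    IsPreconnected (Metric.ball c r) := by
  refine OrdConnected.isPreconnected ⟨fun x hx y hy z hz => ?_⟩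
  have hxz : (x : ℝ) ≤ z := hz.1
  have hzy : (z : ℝ) ≤ y := hz.2
  simp only [Metric.mem_ball, Subtype.dist_eq, Real.dist_eq, abs_lt] at hx hy ⊢
  constructor <;> linarith

theorem exists_finset_pi_ball_subset {ι : Type*} {Y : ι → Type*} [∀ i, PseudoMetricSpace (Y i)]
    {e : ∀ i, Y i} {W : Set (∀ i, Y i)} (hW : W ∈ 𝓝 e) (k : ι) :
    ∃ K : Finset ι, ∃ r : ι → ℝ, k ∈ K ∧ (∀ i, 0 < r i) ∧
      (K : Set ι).pi (fun i => Metric.ball (e i) (r i)) ⊆ W := by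
  classical
  rw [nhds_pi, Filter.mem_pi'] at hW
  obtain ⟨I, t, ht, hIW⟩ := hW
  choose r hr hrt using fun i => Metric.mem_nhds_iff.1 (ht i)
  refine ⟨insert k I, r, I.mem_insert_self k, hr, fun x hx => hIW fun i hi => hrt i ?_⟩
  exact hx i (Finset.mem_insert_of_mem hi)

theorem IsCompact.exists_eventually_apply_notMem_of_isGδ {ι Y : Type*} [Countable ι]
    [TopologicalSpace Y] [T2Space Y] {E : Set (ι → Y)} (hE : IsCompact E) (hne : E.Nonempty)
    {G : Set Y} (hG : IsGδ G) (hEG : ∀ x ∈ E, ∃ i, x i ∉ G) :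
    ∃ e ∈ E, ∃ i, ∃ O, IsOpen O ∧ G ⊆ O ∧ ∀ᶠ x in 𝓝[E] e, x i ∉ O := by
  obtain ⟨f, hfo, rfl⟩ := isGδ_iff_eq_iInter_nat.1 hG
  have := isCompact_iff_compactSpace.1 hE
  have := hne.to_subtype
  have hclosed : ∀ p : ι × ℕ, IsClosed {z : E | (z : ι → Y) p.1 ∉ f p.2} := fun p =>
    (hfo p.2).isClosed_compl.preimage (f := fun z : E => (z : ι → Y) p.1)
      ((continuous_apply p.1).comp continuous_subtype_val)
  have hcover : ⋃ p : ι × ℕ, {z : E | (z : ι → Y) p.1 ∉ f p.2} = univ := by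
    refine eq_univ_of_forall fun z => ?_
    obtain ⟨i, hi⟩ := hEG z z.2
    obtain ⟨n, hn⟩ := not_forall.1 (mt mem_iInter.2 hi)
    exact mem_iUnion.2 ⟨(i, n), hn⟩
  obtain ⟨⟨i, n⟩, z, hz⟩ := nonempty_interior_of_iUnion_of_closed hclosed hcover
  refine ⟨z, z.2, i, f n, hfo n, iInter_subset f n, ?_⟩
  filter_upwards [mem_nhds_subtype_iff_nhdsWithin.1 (mem_interior_iff_mem_nhds.1 hz)]
    with x ⟨y, hy, hyx⟩
  exact hyx ▸ hy

theorem IsTameOpenBall.closure_ne_univ {B : Set HilbertCube} (h : IsTameOpenBall B) :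
    closure B ≠ univ := by
  obtain ⟨-, O, -, -, e, he⟩ := h
  intro hB
  have h2 := (he (e.symm (fun _ => 0, ⟨2, zero_le_two⟩))).1 (hB ▸ mem_univ _)
  norm_num at h2

theorem Vanishing.finite_setOf_closure_meets_both_faces {ℱ : Set (Set HilbertCube)}
    (h : Vanishing ℱ) (j : ℕ) :
    {F ∈ ℱ | ∃ x ∈ closure F, ∃ y ∈ closure F, x j = 0 ∧ y j = 1}.Finite := by
  have hc : Continuous fun x : HilbertCube => (x j : ℝ) :=
    continuous_subtype_val.comp (continuous_apply j)
  set u₁ : Set HilbertCube := {x | (x j : ℝ) < 2 / 3}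
  set u₂ : Set HilbertCube := {x | (1 / 3 : ℝ) < x j}
  have hopen : ∀ u ∈ ({u₁, u₂} : Set (Set HilbertCube)), IsOpen u := by
    rintro u (rfl | rfl)
    exacts [isOpen_lt hc continuous_const, isOpen_lt continuous_const hc]
  have hcover : ⋃₀ {u₁, u₂} = univ := by
    refine eq_univ_of_forall fun x => ?_
    rcases lt_or_ge (x j : ℝ) (2 / 3) with hx | hx
    exacts [⟨u₁, Or.inl rfl, hx⟩, ⟨u₂, Or.inr rfl, show (1 / 3 : ℝ) < x j by linarith⟩]
  refine (((h _ hopen hcover).finite_nonempty_of_compact).image Subtype.val).subset ?_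
  rintro F ⟨hF, x, hx, y, hy, hx0, hy1⟩
  refine ⟨⟨F, hF, ?_⟩, ⟨x, hx⟩ |> closure_nonempty_iff.1, rfl⟩
  rintro ⟨u, rfl | rfl, hFu⟩
  · have := closure_lt_subset_le hc continuous_const (closure_mono hFu hy)
    norm_num [hy1] at this
  · have := closure_lt_subset_le continuous_const hc (closure_mono hFu hx)
    norm_num [hx0] at this

section Slices

variable {𝒰 : Set (Set HilbertCube)} {O : Set unitInterval} {K : Finset ℕ}
  {V : ℕ → Set unitInterval} {k : ℕ}

theorem exists_update_image_subset_closure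
    (hdisj : 𝒰.Pairwise fun B C => closure B ∩ closure C = ∅)
    (hV : ∀ i ∈ K, IsPreconnected (V i)) (hne : ((K : Set ℕ).pi V).Nonempty)
    (hcov : ∀ x ∈ (K : Set ℕ).pi V, x k ∈ O → ∃ B ∈ 𝒰, x ∈ interior (closure B))
    {t : unitInterval} (ht : t ∈ V k ∩ O) :
    ∃ B ∈ 𝒰, (update · k t) '' (K : Set ℕ).pi V ⊆ closure B := by
  have hsub : (update · k t) '' (K : Set ℕ).pi V ⊆ ⋃ B ∈ 𝒰, interior (closure B) := by
    rintro _ ⟨x, hx, rfl⟩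
    obtain ⟨B, hB, hxB⟩ :=
      hcov _ ((update_mem_pi_iff_of_mem hx).2 fun _ => ht.1) (by simpa using ht.2)
    exact mem_biUnion hB hxB
  obtain ⟨B, hB, hsB⟩ := (isPreconnected_set_pi hV).image _
      (continuous_id.update k continuous_const).continuousOn
    |>.exists_subset_of_subset_biUnion_of_isOpen (hne.image _) (fun _ _ => isOpen_interior)
      (hdisj.pairwiseDisjoint_closure.mono fun _ => interior_subset) hsub
  exact ⟨B, hB, hsB.trans interior_subset⟩

theorem exists_pi_subset_closure_of_vanishing (hvan : Vanishing 𝒰)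
    (hdisj : 𝒰.Pairwise fun B C => closure B ∩ closure C = ∅) (hO : Dense O) (hk : k ∈ K)
    (hVk : IsOpen (V k)) (hV : ∀ i ∈ K, IsPreconnected (V i)) (hne : ((K : Set ℕ).pi V).Nonempty)
    (hcov : ∀ x ∈ (K : Set ℕ).pi V, x k ∈ O → ∃ B ∈ 𝒰, x ∈ interior (closure B)) :
    ∃ B ∈ 𝒰, (K : Set ℕ).pi V ⊆ closure B := by
  set N := (K : Set ℕ).pi V
  set 𝒞 := {B ∈ 𝒰 | ∃ t ∈ V k ∩ O, (update · k t) '' N ⊆ closure B}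
  obtain ⟨x₀, hx₀⟩ := hne
  have h𝒞 : 𝒞.Finite := by
    obtain ⟨j, hj⟩ := Infinite.exists_notMem_finset K
    have hjk : j ≠ k := ne_of_mem_of_not_mem hk hj |>.symm
    refine (hvan.finite_setOf_closure_meets_both_faces j).subset ?_
    rintro B ⟨hB, t, -, htB⟩
    have hmem : ∀ a, update (update x₀ j a) k t ∈ closure B := fun a =>
      htB ⟨_, (update_mem_pi_iff_of_mem hx₀).2 fun h => (hj h).elim, rfl⟩
    exact ⟨hB, _, hmem 0, _, hmem 1, by simp [hjk], by simp [hjk]⟩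
  have hcover : N ⊆ ⋃ B ∈ 𝒞, closure B := by
    intro x hx
    have hA : V k ∩ O ⊆ ⋃ B ∈ 𝒞, {t | update x k t ∈ closure B} := fun t ht => by
      obtain ⟨B, hB, htB⟩ := exists_update_image_subset_closure hdisj hV ⟨x₀, hx₀⟩ hcov ht
      exact mem_biUnion ⟨hB, t, ht, htB⟩ (htB ⟨x, hx, rfl⟩)
    have hxk := closure_mono hA (hO.open_subset_closure_inter hVk (hx k hk))
    rw [h𝒞.closure_biUnion] at hxk
    obtain ⟨B, hB, hxB⟩ := mem_iUnion₂.1 hxk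
    have := (isClosed_closure.preimage (f := (update x k ·))
      (continuous_const.update k continuous_id)).closure_subset hxB
    rw [mem_preimage, update_eq_self] at this
    exact mem_biUnion hB this
  obtain ⟨B, hB, hNB⟩ := (isPreconnected_set_pi hV).exists_subset_of_subset_biUnion_of_isClosed
    ⟨x₀, hx₀⟩ h𝒞 (fun _ _ => isClosed_closure)
    (hdisj.pairwiseDisjoint_closure.subset fun _ hB => hB.1) hcover
  exact ⟨B, hB.1, hNB⟩

end Slices

theorem IsTameOpen.not_countable_power_subset {U : Set HilbertCube} (hU : IsTameOpen U)
    {G : Set unitInterval} (hGd : Dense G) (hG : IsGδ G) :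
    ¬ {x : HilbertCube | ∀ n, x n ∈ G} ⊆ U := by
  obtain ⟨𝒰, hvan, hballs, hdisj, rfl⟩ := hU
  intro hGU
  set E := ⋂ B ∈ 𝒰, (interior (closure B))ᶜ
  have hEne : E.Nonempty := by
    obtain ⟨x, hx⟩ := exists_forall_notMem_interior_closure
      (fun B hB => (hballs B hB).closure_ne_univ) hdisj
    exact ⟨x, mem_iInter₂.2 hx⟩
  have hEG : ∀ x ∈ E, ∃ n, x n ∉ G := by
    intro x hx
    by_contra! h
    obtain ⟨B, hB, hxB⟩ := hGU h
    exact mem_iInter₂.1 hx B hB (interior_maximal subset_closure (hballs B hB).1 hxB)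
  obtain ⟨e, heE, k, O, -, hGO, hev⟩ :=
    (isClosed_biInter fun B _ => isOpen_interior.isClosed_compl).isCompact
      |>.exists_eventually_apply_notMem_of_isGδ hEne hG hEG
  obtain ⟨K, r, hk, hr, hKE⟩ := exists_finset_pi_ball_subset (eventually_nhdsWithin_iff.1 hev) k
  have hN : (K : Set ℕ).pi (fun i => Metric.ball (e i) (r i)) ∈ 𝓝 e :=
    set_pi_mem_nhds K.finite_toSet fun i _ => Metric.ball_mem_nhds _ (hr i)
  obtain ⟨B, hB, hNB⟩ := exists_pi_subset_closure_of_vanishing hvan hdisj (hGd.mono hGO) hk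
    Metric.isOpen_ball (fun i _ => unitInterval.isPreconnected_ball _ _)
    ⟨e, mem_of_mem_nhds hN⟩ fun x hxN hxO => by
      by_contra! h
      exact hKE hxN (mem_iInter₂.2 h) hxO
  exact mem_iInter₂.1 heE B hB (mem_interior_iff_mem_nhds.2 (Filter.mem_of_superset hN hNB))

/-- For any dense `Gδ`-set `G ⊆ [0,1]`, the countable power `G^ω` is not a tame `Gδ`-set
in the Hilbert cube. -/
theorem countable_power_not_tameGδ (G : Set unitInterval) (hGd : Dense G) (hG : IsGδ G) :
    ¬ IsTameGδ {x : HilbertCube | ∀ n, x n ∈ G} := by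
  rintro ⟨U, hU, -, -, -, hGU⟩
  exact (hU 0).not_countable_power_subset hGd hG (hGU.trans_subset (iInter_subset U 0))
end

section
/- Let X be a Polish space and 𝒦 a topologically invariant family of closed subsets of X. If B and B' are 𝒦-absorptive sets in X, then for any open set V ⊆ X and any open cover 𝒰 of V there is a homeomorphism h : V → V such that h(V ∩ B) = V ∩ B' and (h, id_V) ≺ 𝒰. In particular, any two 𝒦-absorptive sets in X are ambiently homeomorphic. -/
open Set Topology

/-- `σ𝒦`: the family of countable unions of members of `𝒦`. -/
def sigmaFam {X : Type*} (𝒦 : Set (Set X)) : Set (Set X) :=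
  {A | ∃ f : ℕ → Set X, (∀ n, f n ∈ 𝒦) ∧ A = ⋃ n, f n}

/-- `𝒦` is topologically invariant: `𝒦 = {h(K) : K ∈ 𝒦}` for every homeomorphism `h`. -/
def TopInvariant {X : Type*} [TopologicalSpace X] (𝒦 : Set (Set X)) : Prop :=
  ∀ h : X ≃ₜ X, (fun K => h '' K) '' 𝒦 = 𝒦

/-- `B` is `𝒦`-absorptive: `B ∈ σ𝒦` and for each `K ∈ 𝒦`, each open `V` and each open
cover `𝒰` of `V` there is a homeomorphism `h : V → V` with `h(K ∩ V) ⊆ B ∩ V` and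
`(h, id_V) ≺ 𝒰`. -/
def IsAbsorptive {X : Type*} [TopologicalSpace X] (𝒦 : Set (Set X)) (B : Set X) : Prop :=
  B ∈ sigmaFam 𝒦 ∧
    ∀ K ∈ 𝒦, ∀ V : Set X, IsOpen V →
      ∀ 𝒰 : Set (Set X), (∀ u ∈ 𝒰, IsOpen u) → V ⊆ ⋃₀ 𝒰 →
        ∃ h : V ≃ₜ V, (∀ x : V, (x : X) ∈ K → (h x : X) ∈ B) ∧
          ∀ x : V, (h x : X) = (x : X) ∨ ∃ u ∈ 𝒰, (h x : X) ∈ u ∧ (x : X) ∈ u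

/-!
Write `B = ⋃ Aₙ` and `B' = ⋃ A'ₙ` with `Aₙ, A'ₙ ∈ 𝒦`, and fix a complete metric on `X`. A
back-and-forth construction produces homeomorphisms `fₙ` of `X`, supported in `V`, such that
`fₙ` carries `A₀, …, Aₙ₋₁` (within `V`) into `B'` and `fₙ⁻¹` carries `A'₀, …, A'ₙ₋₁` into `B`.
To place the next set, compose with a homeomorphism absorbing its image into `B'` (or `B`):
by topological invariance that image is again in `𝒦`, and the absorption is performed on `V`
minus the closed set of points already placed, so those points stay where they are. All
displacements are bounded by a gauge subordinate to `𝒰` and decay geometrically, so `fₙ` and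
`fₙ⁻¹` converge uniformly; the limit is a homeomorphism which agrees with `fₙ` on the sets
placed at stage `n`, hence matches `V ∩ B` with `V ∩ B'`.
-/

open Filter Metric

namespace AbsorptiveSet

theorem exists_seq_of_forall_exists {α : Type*} {P : ℕ → α → Prop} {R : ℕ → α → α → Prop}
    {a : α} (h0 : P 0 a) (step : ∀ n a, P n a → ∃ b, P (n + 1) b ∧ R n a b) :
    ∃ f : ℕ → α, (∀ n, P n (f n)) ∧ ∀ n, R n (f n) (f (n + 1)) := by
  choose next hnext using step
  let F : ∀ n, {a // P n a} := fun n =>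
    Nat.rec ⟨a, h0⟩ (fun n p => ⟨next n p.1 p.2, (hnext n p.1 p.2).1⟩) n
  exact ⟨fun n => (F n).1, fun n => (F n).2, fun n => (hnext n (F n).1 (F n).2).2⟩

theorem apply_mem_iff_of_forall_notMem {α : Type*} {f : α → α} (hf : Function.Injective f)
    {s : Set α} (hfix : ∀ x ∉ s, f x = x) (x : α) : f x ∈ s ↔ x ∈ s := by
  refine ⟨fun hfx => ?_, fun hx => ?_⟩
  · by_contra hx
    exact hx (hfix x hx ▸ hfx)
  · by_contra hfx
    rw [hf (hfix (f x) hfx)] at hfx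
    exact hfx hx

theorem TopInvariant.image_mem {X : Type*} [TopologicalSpace X] {𝒦 : Set (Set X)}
    (hinv : TopInvariant 𝒦) (h : X ≃ₜ X) {K : Set X} (hK : K ∈ 𝒦) : h '' K ∈ 𝒦 :=
  hinv h ▸ mem_image_of_mem _ hK

theorem eq_of_tendsto_of_forall_succ_eq {Y : Type*} [TopologicalSpace Y] [T2Space Y]
    {u : ℕ → Y} {a : Y} (hu : Tendsto u atTop (𝓝 a)) {N : ℕ} (h : ∀ m ≥ N, u (m + 1) = u m) :
    a = u N := by
  refine tendsto_nhds_unique hu (tendsto_const_nhds.congr' ?_)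
  filter_upwards [eventually_ge_atTop N] with m hm
  induction m, hm using Nat.le_induction with
  | base => rfl
  | succ m hm ih => rw [h m hm, ih]

theorem eventually_nhds_prod_dist_lt {X Y : Type*} [TopologicalSpace X] [PseudoMetricSpace Y]
    {g : X → Y} (hg : Continuous g) {r : X → ℝ} (hr : Continuous r) {y : X} (hy : 0 < r y) :
    ∀ᶠ p in 𝓝 y ×ˢ 𝓝 y, dist (g p.1) (g p.2) < r p.2 := by
  rw [← nhds_prod_eq]
  refine ContinuousAt.eventually_lt (f := fun p : X × X => dist (g p.1) (g p.2)) ?_ ?_ (by simpa)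
  · exact ((hg.comp continuous_fst).dist (hg.comp continuous_snd)).continuousAt
  · exact (hr.comp continuous_snd).continuousAt

section UniformLimit

theorem exists_homeomorph_of_tendstoUniformly {X : Type*} [UniformSpace X] [T2Space X]
    {F : ℕ → X ≃ₜ X} {Φ Ψ : X → X} (hΦ : TendstoUniformly (fun n => ⇑(F n)) Φ atTop)
    (hΨ : TendstoUniformly (fun n => ⇑(F n).symm) Ψ atTop) :
    ∃ H : X ≃ₜ X, ⇑H = Φ ∧ ⇑H.symm = Ψ := by
  have hΦc : Continuous Φ := hΦ.continuous (Frequently.of_forall fun n => (F n).continuous)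
  have hΨc : Continuous Ψ := hΨ.continuous (Frequently.of_forall fun n => (F n).symm.continuous)
  have left_inv : Function.LeftInverse Ψ Φ := fun x =>
    tendsto_nhds_unique (hΨ.tendsto_comp hΨc.continuousAt (hΦ.tendsto_at x))
      (by simp only [Homeomorph.symm_apply_apply, tendsto_const_nhds])
  have right_inv : Function.RightInverse Ψ Φ := fun y =>
    tendsto_nhds_unique (hΦ.tendsto_comp hΦc.continuousAt (hΨ.tendsto_at y))
      (by simp only [Homeomorph.apply_symm_apply, tendsto_const_nhds])
  exact ⟨⟨⟨Φ, Ψ, left_inv, right_inv⟩, hΦc, hΨc⟩, rfl, rfl⟩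

theorem exists_tendstoUniformly_of_dist_le_geometric_two {α X : Type*} [PseudoMetricSpace X]
    [CompleteSpace X] {F : ℕ → α → X} {C : ℝ}
    (hF : ∀ n x, dist (F n x) (F (n + 1) x) ≤ C / 2 / 2 ^ n) :
    ∃ Φ : α → X, TendstoUniformly F Φ atTop := by
  choose Φ hΦ using fun x => cauchySeq_tendsto_of_complete (cauchySeq_of_le_geometric_two (hF · x))
  refine ⟨Φ, Metric.tendstoUniformly_iff.2 fun ε hε => ?_⟩
  have hC : Tendsto (fun n : ℕ => C / 2 ^ n) atTop (𝓝 0) :=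
    tendsto_const_nhds.div_atTop (tendsto_pow_atTop_atTop_of_one_lt one_lt_two)
  filter_upwards [hC.eventually (gt_mem_nhds hε)] with n hn x
  rw [dist_comm]
  exact (dist_le_of_le_geometric_two_of_tendsto (hF · x) (hΦ x) n).trans_lt hn

theorem exists_homeomorph_tendsto_of_dist_le_geometric_two {X : Type*} [MetricSpace X]
    [CompleteSpace X] {F : ℕ → X ≃ₜ X} {C : ℝ}
    (hF : ∀ n x, dist (F n x) (F (n + 1) x) ≤ C / 2 / 2 ^ n)
    (hF' : ∀ n y, dist ((F n).symm y) ((F (n + 1)).symm y) ≤ C / 2 / 2 ^ n) :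
    ∃ H : X ≃ₜ X, (∀ x, Tendsto (F · x) atTop (𝓝 (H x))) ∧
      ∀ y, Tendsto (fun n => (F n).symm y) atTop (𝓝 (H.symm y)) := by
  obtain ⟨Φ, hΦ⟩ := exists_tendstoUniformly_of_dist_le_geometric_two hF
  obtain ⟨Ψ, hΨ⟩ := exists_tendstoUniformly_of_dist_le_geometric_two hF'
  obtain ⟨H, rfl, rfl⟩ := exists_homeomorph_of_tendstoUniformly hΦ hΨ
  exact ⟨H, hΦ.tendsto_at, hΨ.tendsto_at⟩

end UniformLimit

section Gauge

variable {X : Type*} [PseudoMetricSpace X]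

/-- The truncation at `1` keeps the value finite when some `u ∩ V` is the whole space. -/
noncomputable def coverGauge (V : Set X) (𝒰 : Set (Set X)) (x : X) : ℝ :=
  (min 1 (⨆ u ∈ 𝒰, infEDist x (u ∩ V)ᶜ)).toReal

variable {V W : Set X} {𝒰 : Set (Set X)}

theorem min_one_ne_top (a : ENNReal) : min 1 a ≠ ⊤ :=
  ne_top_of_le_ne_top ENNReal.one_ne_top (min_le_left _ _)

theorem coverGauge_nonneg (V : Set X) (𝒰 : Set (Set X)) (x : X) : 0 ≤ coverGauge V 𝒰 x :=
  ENNReal.toReal_nonneg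

theorem coverGauge_le_one (V : Set X) (𝒰 : Set (Set X)) (x : X) : coverGauge V 𝒰 x ≤ 1 :=
  ENNReal.toReal_le_of_le_ofReal zero_le_one (by simp)

theorem coverGauge_le_add_dist (V : Set X) (𝒰 : Set (Set X)) (x y : X) :
    coverGauge V 𝒰 x ≤ coverGauge V 𝒰 y + dist x y := by
  have hsup : ⨆ u ∈ 𝒰, infEDist x (u ∩ V)ᶜ ≤ (⨆ u ∈ 𝒰, infEDist y (u ∩ V)ᶜ) + edist x y :=
    iSup₂_le fun u hu => infEDist_le_infEDist_add_edist.trans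
      (add_le_add (le_iSup₂ (f := fun u _ => infEDist y (u ∩ V)ᶜ) u hu) le_rfl)
  have hmin : min 1 (⨆ u ∈ 𝒰, infEDist x (u ∩ V)ᶜ) ≤
      min 1 (⨆ u ∈ 𝒰, infEDist y (u ∩ V)ᶜ) + edist x y := by
    rw [← min_add_add_right]
    exact min_le_min le_self_add hsup
  have hfin : min 1 (⨆ u ∈ 𝒰, infEDist y (u ∩ V)ᶜ) ≠ ⊤ :=
    min_one_ne_top _
  rw [coverGauge, coverGauge, dist_edist, ← ENNReal.toReal_add hfin (edist_ne_top x y)]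
  exact ENNReal.toReal_mono (ENNReal.add_ne_top.2 ⟨hfin, edist_ne_top x y⟩) hmin

theorem continuous_coverGauge (V : Set X) (𝒰 : Set (Set X)) : Continuous (coverGauge V 𝒰) :=
  (LipschitzWith.of_le_add (coverGauge_le_add_dist V 𝒰)).continuous

theorem coverGauge_pos (hV : IsOpen V) (h𝒰 : ∀ u ∈ 𝒰, IsOpen u) (hcov : V ⊆ ⋃₀ 𝒰) {x : X}
    (hx : x ∈ V) : 0 < coverGauge V 𝒰 x := by
  obtain ⟨u, hu, hxu⟩ := hcov hx
  have hpos : 0 < infEDist x (u ∩ V)ᶜ := by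
    rw [infEDist_pos_iff_notMem_closure, ((h𝒰 u hu).inter hV).isClosed_compl.closure_eq]
    exact not_not.2 ⟨hxu, hx⟩
  refine ENNReal.toReal_pos (lt_min one_pos (hpos.trans_le (le_iSup₂ (f := fun u _ =>
    infEDist x (u ∩ V)ᶜ) u hu))).ne' (min_one_ne_top _)

theorem exists_mem_of_dist_lt_coverGauge {x y : X} (h : dist y x < coverGauge V 𝒰 x) :
    ∃ u ∈ 𝒰, y ∈ u ∩ V ∧ x ∈ u ∩ V := by
  have h' : edist y x < ⨆ u ∈ 𝒰, infEDist x (u ∩ V)ᶜ := by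
    rw [edist_dist]
    refine (ENNReal.ofReal_lt_iff_lt_toReal dist_nonneg ?_).2 h |>.trans_le ?_
    · exact min_one_ne_top _
    · exact min_le_right _ _
  obtain ⟨u, hu, hlt⟩ := by simpa only [lt_iSup_iff] using h'
  refine ⟨u, hu, ?_, ?_⟩
  · by_contra hy
    exact (infEDist_le_edist_of_mem hy).not_gt (edist_comm x y ▸ hlt)
  · by_contra hx
    exact (infEDist_le_edist_of_mem hx).not_gt ((edist_self x).symm ▸ zero_le.trans_lt hlt)

theorem coverGauge_mono (hWV : W ⊆ V) (x : X) : coverGauge W 𝒰 x ≤ coverGauge V 𝒰 x := by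
  refine ENNReal.toReal_mono (min_one_ne_top _) ?_
  gcongr

theorem coverGauge_le_dist_of_notMem (y : X) {x : X} (hx : x ∉ V) :
    coverGauge V 𝒰 y ≤ dist y x := by
  rw [dist_edist]
  refine ENNReal.toReal_mono (edist_ne_top y x) ((min_le_right _ _).trans (iSup₂_le fun u _ => ?_))
  exact infEDist_le_edist_of_mem fun hx' => hx hx'.2

theorem dist_comp_le_coverGauge {φ ψ : X → X} {a b : ℝ} (hb : 0 ≤ b)
    (hφ : ∀ x, dist (φ x) x ≤ a * coverGauge V 𝒰 x)
    (hψ : ∀ x, dist (ψ x) x ≤ b * coverGauge V 𝒰 x) (x : X) :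
    dist (ψ (φ x)) x ≤ (a + b + a * b) * coverGauge V 𝒰 x := by
  have hgauge : coverGauge V 𝒰 (φ x) ≤ coverGauge V 𝒰 x + a * coverGauge V 𝒰 x :=
    (coverGauge_le_add_dist V 𝒰 (φ x) x).trans (by linarith [hφ x])
  have := mul_le_mul_of_nonneg_left hgauge hb
  linarith [dist_triangle (ψ (φ x)) (φ x) x, hφ x, hψ (φ x)]

end Gauge

section Extension

variable {X : Type*} [PseudoMetricSpace X] {W : Set X}

theorem continuous_ofSubtype_of_dist_le [DecidablePred (· ∈ W)] (hW : IsOpen W)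
    {e : Equiv.Perm W} (he : Continuous e) {ρ : X → ℝ} (hρW : ∀ y, ∀ x ∉ W, ρ y ≤ dist y x)
    (hρ : ∀ z : W, dist (e z : X) z ≤ ρ z) : Continuous (Equiv.Perm.ofSubtype e) := by
  refine continuous_iff_continuousAt.2 fun x => ?_
  by_cases hx : x ∈ W
  · have hon : ContinuousOn (Equiv.Perm.ofSubtype e) W := by
      rw [continuousOn_iff_continuous_domRestrict]
      convert continuous_subtype_val.comp he using 1
      funext z
      exact Equiv.Perm.ofSubtype_apply_coe e z
    exact hon.continuousAt (hW.mem_nhds hx)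
  · have hbound : ∀ y, dist (Equiv.Perm.ofSubtype e y) x ≤ 2 * dist y x := by
      intro y
      by_cases hy : y ∈ W
      · rw [Equiv.Perm.ofSubtype_apply_of_mem e hy]
        linarith [dist_triangle (e ⟨y, hy⟩ : X) y x, hρ ⟨y, hy⟩, hρW y x hx]
      · rw [Equiv.Perm.ofSubtype_apply_of_not_mem e hy]
        linarith [dist_nonneg (x := y) (y := x)]
    rw [ContinuousAt, Equiv.Perm.ofSubtype_apply_of_not_mem e hx, tendsto_iff_dist_tendsto_zero]
    refine squeeze_zero (fun _ => dist_nonneg) hbound ?_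
    simpa using ((continuous_id.dist (continuous_const (y := x))).tendsto x).const_mul (2 : ℝ)

theorem exists_homeomorph_extend_of_dist_le (hW : IsOpen W) (e : W ≃ₜ W) {ρ : X → ℝ}
    (hρW : ∀ y, ∀ x ∉ W, ρ y ≤ dist y x) (he : ∀ z : W, dist (e z : X) z ≤ ρ z)
    (he' : ∀ z : W, dist (e.symm z : X) z ≤ ρ z) :
    ∃ E : X ≃ₜ X, (∀ z : W, E z = e z) ∧ ∀ x ∉ W, E x = x := by
  classical
  refine ⟨⟨Equiv.Perm.ofSubtype e.toEquiv,
    continuous_ofSubtype_of_dist_le hW e.continuous hρW he, ?_⟩,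
    Equiv.Perm.ofSubtype_apply_coe e.toEquiv,
    fun x hx => Equiv.Perm.ofSubtype_apply_of_not_mem e.toEquiv hx⟩
  have hinv : (Equiv.Perm.ofSubtype e.toEquiv).symm = Equiv.Perm.ofSubtype e.symm.toEquiv :=
    (map_inv Equiv.Perm.ofSubtype e.toEquiv).symm
  change Continuous (Equiv.Perm.ofSubtype e.toEquiv).symm
  exact hinv ▸ continuous_ofSubtype_of_dist_le hW e.symm.continuous hρW he'

end Extension

section Absorbing

variable {X : Type*} {𝒦 : Set (Set X)} {T K W : Set X}

theorem exists_homeomorph_subtype_absorbing [TopologicalSpace X] (hT : IsAbsorptive 𝒦 T)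
    (hK : K ∈ 𝒦) (hW : IsOpen W) {P : X → X → Prop}
    (hP : ∀ y ∈ W, ∀ᶠ p in 𝓝 y ×ˢ 𝓝 y, P p.1 p.2) :
    ∃ e : W ≃ₜ W, (∀ z : W, (z : X) ∈ K → (e z : X) ∈ T) ∧
      ∀ z : W, (e z : X) = z ∨ P (e z) z ∧ P z (e z) := by
  let 𝒱 : Set (Set X) := {v | IsOpen v ∧ ∀ a ∈ v, ∀ b ∈ v, P a b}
  have hcov : W ⊆ ⋃₀ 𝒱 := by
    intro y hy
    obtain ⟨t, ht, hPt⟩ := eventually_prod_self_iff.1 (hP y hy)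
    obtain ⟨v, hvt, hvo, hyv⟩ := mem_nhds_iff.1 ht
    exact ⟨v, ⟨hvo, fun a ha b hb => hPt a (hvt ha) b (hvt hb)⟩, hyv⟩
  obtain ⟨e, habs, hclose⟩ := hT.2 K hK W hW 𝒱 (fun v hv => hv.1) hcov
  refine ⟨e, habs, fun z => (hclose z).imp_right ?_⟩
  rintro ⟨v, ⟨-, hv⟩, hez, hz⟩
  exact ⟨hv _ hez _ hz, hv _ hz _ hez⟩

theorem exists_homeomorph_absorbing [PseudoMetricSpace X] (hT : IsAbsorptive 𝒦 T) (hK : K ∈ 𝒦)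
    (hW : IsOpen W) {P : X → X → Prop} (hP : ∀ y ∈ W, ∀ᶠ p in 𝓝 y ×ˢ 𝓝 y, P p.1 p.2)
    (hrefl : ∀ x, P x x) {ρ : X → ℝ} (hρW : ∀ y, ∀ x ∉ W, ρ y ≤ dist y x)
    (hPρ : ∀ a b, P a b → dist a b ≤ ρ b) :
    ∃ E : X ≃ₜ X, (∀ x ∉ W, E x = x) ∧ (∀ x ∈ K ∩ W, E x ∈ T) ∧
      ∀ x, P (E x) x ∧ P x (E x) := by
  obtain ⟨e, habs, hclose⟩ := exists_homeomorph_subtype_absorbing hT hK hW hP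
  have hPe (z : W) : P (e z) z ∧ P z (e z) :=
    (hclose z).elim (fun h => h ▸ ⟨hrefl _, hrefl _⟩) id
  obtain ⟨E, hEe, hEW⟩ := exists_homeomorph_extend_of_dist_le hW e hρW
    (fun z => hPρ _ _ (hPe z).1)
    (fun z => hPρ _ _ (by simpa using (hPe (e.symm z)).2))
  refine ⟨E, hEW, fun x hx => hEe ⟨x, hx.2⟩ ▸ habs ⟨x, hx.2⟩ hx.1, fun x => ?_⟩
  by_cases hx : x ∈ W
  · exact hEe ⟨x, hx⟩ ▸ hPe ⟨x, hx⟩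
  · rw [hEW x hx]
    exact ⟨hrefl x, hrefl x⟩

theorem exists_small_homeomorph_absorbing [PseudoMetricSpace X] {𝒰 : Set (Set X)}
    (hT : IsAbsorptive 𝒦 T) (hK : K ∈ 𝒦) (hW : IsOpen W) (h𝒰 : ∀ u ∈ 𝒰, IsOpen u)
    (hcov : W ⊆ ⋃₀ 𝒰) (g : X ≃ₜ X) {η : ℝ} (hη₀ : 0 < η) (hη₁ : η ≤ 1) :
    ∃ E : X ≃ₜ X, (∀ x ∉ W, E x = x) ∧ (∀ x ∈ K ∩ W, E x ∈ T) ∧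
      (∀ x, dist (E x) x ≤ η * coverGauge W 𝒰 x) ∧
      (∀ y, dist (E.symm y) y ≤ η * coverGauge W 𝒰 y) ∧
      ∀ y, dist (g (E.symm y)) (g y) ≤ η := by
  -- The second clause keeps `g ∘ E⁻¹` uniformly close to `g`: it is what makes the inverses of
  -- the back-and-forth sequence converge.
  let P (a b : X) : Prop := dist a b ≤ η * coverGauge W 𝒰 b ∧ dist (g a) (g b) ≤ η
  have hP : ∀ y ∈ W, ∀ᶠ p in 𝓝 y ×ˢ 𝓝 y, P p.1 p.2 := fun y hy =>
    ((eventually_nhds_prod_dist_lt continuous_id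
      (continuous_const.mul (continuous_coverGauge W 𝒰))
      (mul_pos hη₀ (coverGauge_pos hW h𝒰 hcov hy))).and
    (eventually_nhds_prod_dist_lt g.continuous continuous_const hη₀)).mono
      fun p hp => ⟨hp.1.le, hp.2.le⟩
  have hrefl (x : X) : P x x := by
    simp only [P, dist_self]
    exact ⟨mul_nonneg hη₀.le (coverGauge_nonneg W 𝒰 x), hη₀.le⟩
  have hPρ (a b : X) (h : P a b) : dist a b ≤ coverGauge W 𝒰 b :=
    h.1.trans (mul_le_of_le_one_left (coverGauge_nonneg W 𝒰 b) hη₁)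
  obtain ⟨E, hEW, hEabs, hEP⟩ := exists_homeomorph_absorbing hT hK hW hP hrefl
    (fun y _ => coverGauge_le_dist_of_notMem y) hPρ
  have hEP' (y : X) : P (E.symm y) y := by simpa using (hEP (E.symm y)).2
  exact ⟨E, hEW, hEabs, fun x => (hEP x).1.1, fun y => (hEP' y).1, fun y => (hEP' y).2⟩

end Absorbing

section BackAndForth

variable {X : Type*} [PseudoMetricSpace X] (V : Set X) (𝒰 : Set (Set X)) (A A' : ℕ → Set X)
  (B B' : Set X)

structure IsPartialMatch (n k : ℕ) (δ : ℝ) (f : X ≃ₜ X) : Prop where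
  fixes_compl : ∀ x ∉ V, f x = x
  dist_le : ∀ x, dist (f x) x ≤ δ * coverGauge V 𝒰 x
  dist_symm_le : ∀ y, dist (f.symm y) y ≤ δ * coverGauge V 𝒰 y
  mapsTo : ∀ i < n, ∀ x ∈ A i ∩ V, f x ∈ B'
  mapsTo_symm : ∀ i < k, ∀ y ∈ A' i ∩ V, f.symm y ∈ B

structure IsCloseUpdate (n k : ℕ) (η : ℝ) (f f' : X ≃ₜ X) : Prop where
  dist_le : ∀ x, dist (f' x) (f x) ≤ η
  dist_symm_le : ∀ y, dist (f'.symm y) (f.symm y) ≤ η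
  eqOn : ∀ i < n, ∀ x ∈ A i ∩ V, f' x = f x
  eqOn_symm : ∀ i < k, ∀ y ∈ A' i ∩ V, f'.symm y = f.symm y

def placedSet (n k : ℕ) (f : X ≃ₜ X) : Set X :=
  (⋃ i ∈ Iio n, f '' A i) ∪ ⋃ i ∈ Iio k, A' i

variable {V 𝒰 A A' B B'} {n k : ℕ} {δ η : ℝ} {f g h : X ≃ₜ X}

theorem IsPartialMatch.symm (hf : IsPartialMatch V 𝒰 A A' B B' n k δ f) :
    IsPartialMatch V 𝒰 A' A B' B k n δ f.symm where
  fixes_compl x hx := f.symm_apply_eq.2 (hf.fixes_compl x hx).symm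
  dist_le := hf.dist_symm_le
  dist_symm_le := hf.dist_le
  mapsTo := hf.mapsTo_symm
  mapsTo_symm := hf.mapsTo

theorem IsCloseUpdate.symm (hfg : IsCloseUpdate V A A' n k η f g) :
    IsCloseUpdate V A' A k n η f.symm g.symm where
  dist_le := hfg.dist_symm_le
  dist_symm_le := hfg.dist_le
  eqOn := hfg.eqOn_symm
  eqOn_symm := hfg.eqOn

theorem IsCloseUpdate.trans {η' : ℝ} (hfg : IsCloseUpdate V A A' n k η f g)
    (hgh : IsCloseUpdate V A A' n k η' g h) : IsCloseUpdate V A A' n k (η + η') f h where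
  dist_le x := by linarith [dist_triangle (h x) (g x) (f x), hfg.dist_le x, hgh.dist_le x]
  dist_symm_le y := by
    linarith [dist_triangle (h.symm y) (g.symm y) (f.symm y), hfg.dist_symm_le y,
      hgh.dist_symm_le y]
  eqOn i hi x hx := (hgh.eqOn i hi x hx).trans (hfg.eqOn i hi x hx)
  eqOn_symm i hi y hy := (hgh.eqOn_symm i hi y hy).trans (hfg.eqOn_symm i hi y hy)

theorem IsCloseUpdate.mono {n' k' : ℕ} (hfg : IsCloseUpdate V A A' n' k' η f g) (hn : n ≤ n')
    (hk : k ≤ k') : IsCloseUpdate V A A' n k η f g where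
  dist_le := hfg.dist_le
  dist_symm_le := hfg.dist_symm_le
  eqOn i hi := hfg.eqOn i (hi.trans_le hn)
  eqOn_symm i hi := hfg.eqOn_symm i (hi.trans_le hk)

variable {𝒦 : Set (Set X)}

theorem isClosed_placedSet (hcl : ∀ K ∈ 𝒦, IsClosed K) (hA : ∀ i, A i ∈ 𝒦)
    (hA' : ∀ i, A' i ∈ 𝒦) (f : X ≃ₜ X) : IsClosed (placedSet A A' n k f) :=
  ((finite_Iio n).isClosed_biUnion fun i _ => f.isClosedMap _ (hcl _ (hA i))).union
    ((finite_Iio k).isClosed_biUnion fun i _ => hcl _ (hA' i))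

theorem IsPartialMatch.apply_mem_of_mem_placedSet (hA'B' : ∀ i, A' i ⊆ B')
    (hf : IsPartialMatch V 𝒰 A A' B B' n k δ f) {x : X} (hx : x ∈ V)
    (hfx : f x ∈ placedSet A A' n k f) : f x ∈ B' := by
  rcases hfx with hfx | hfx <;> obtain ⟨i, hi, hfx⟩ := mem_iUnion₂.1 hfx
  · obtain ⟨x', hx', hfx'⟩ := hfx
    rw [f.injective hfx'] at hx'
    exact hf.mapsTo i hi x ⟨hx', hx⟩
  · exact hA'B' i hfx

theorem isCloseUpdate_homeomorph_trans {E : X ≃ₜ X} (hE : ∀ x, dist (E x) x ≤ η)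
    (hfE : ∀ y, dist (f.symm (E.symm y)) (f.symm y) ≤ η)
    (hEC : ∀ x ∈ placedSet A A' n k f, E x = x) : IsCloseUpdate V A A' n k η f (f.trans E) where
  dist_le x := hE (f x)
  dist_symm_le := hfE
  eqOn _ hi x hx := hEC (f x) (Or.inl (mem_biUnion hi ⟨x, hx.1, rfl⟩))
  eqOn_symm _ hi y hy :=
    congrArg f.symm (E.symm_apply_eq.2 (hEC y (Or.inr (mem_biUnion hi hy.1))).symm)

theorem IsPartialMatch.exists_forth (hcl : ∀ K ∈ 𝒦, IsClosed K) (hinv : TopInvariant 𝒦)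
    (hV : IsOpen V) (h𝒰 : ∀ u ∈ 𝒰, IsOpen u) (hcov : V ⊆ ⋃₀ 𝒰)
    (hA : ∀ i, A i ∈ 𝒦) (hA' : ∀ i, A' i ∈ 𝒦) (hA'B' : ∀ i, A' i ⊆ B') (hB' : IsAbsorptive 𝒦 B')
    (hf : IsPartialMatch V 𝒰 A A' B B' n k δ f) (hδ₀ : 0 ≤ δ) (hδ₁ : δ ≤ 1) (hη₀ : 0 < η)
    (hη₁ : η ≤ 1) :
    ∃ f', IsPartialMatch V 𝒰 A A' B B' (n + 1) k (δ + 2 * η) f' ∧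
      IsCloseUpdate V A A' n k η f f' := by
  -- Absorbing inside `V \ C` leaves the points already placed where they are.
  set C := placedSet A A' n k f
  obtain ⟨E, hEW, hEabs, hE, hE', hfE⟩ := exists_small_homeomorph_absorbing hB'
    (TopInvariant.image_mem hinv f (hA n)) (hV.sdiff (isClosed_placedSet hcl hA hA' f)) h𝒰
    (sdiff_subset.trans hcov) f.symm hη₀ hη₁
  have hEC : ∀ x ∈ C, E x = x := fun x hx => hEW x fun h => h.2 hx
  have hEκ (x : X) : dist (E x) x ≤ η * coverGauge V 𝒰 x :=
    (hE x).trans (mul_le_mul_of_nonneg_left (coverGauge_mono sdiff_subset x) hη₀.le)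
  have hEκ' (y : X) : dist (E.symm y) y ≤ η * coverGauge V 𝒰 y :=
    (hE' y).trans (mul_le_mul_of_nonneg_left (coverGauge_mono sdiff_subset y) hη₀.le)
  have hupd : IsCloseUpdate V A A' n k η f (f.trans E) := isCloseUpdate_homeomorph_trans
    (fun x => (hE x).trans (mul_le_of_le_one_right hη₀.le (coverGauge_le_one _ _ _))) hfE hEC
  refine ⟨f.trans E, ⟨fun x hx => ?_, fun x => ?_, fun y => ?_, fun i hi x hx => ?_,
    fun i hi y hy => ?_⟩, hupd⟩
  · show E (f x) = x
    rw [hf.fixes_compl x hx, hEW x fun h => hx h.1]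
  · refine (dist_comp_le_coverGauge hη₀.le hf.dist_le hEκ x).trans ?_
    gcongr ?_ * _
    · exact coverGauge_nonneg V 𝒰 x
    · nlinarith
  · refine (dist_comp_le_coverGauge hδ₀ hEκ' hf.dist_symm_le y).trans ?_
    gcongr ?_ * _
    · exact coverGauge_nonneg V 𝒰 y
    · nlinarith
  · rcases Nat.lt_succ_iff_lt_or_eq.1 hi with hi | rfl
    · rw [hupd.eqOn i hi x hx]
      exact hf.mapsTo i hi x hx
    · show E (f x) ∈ B'
      by_cases hW : f x ∈ V \ C
      · exact hEabs _ ⟨⟨x, hx.1, rfl⟩, hW⟩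
      · have hfxV : f x ∈ V :=
          (apply_mem_iff_of_forall_notMem f.injective hf.fixes_compl x).2 hx.2
        have hfxC : f x ∈ C := not_not.1 fun h => hW ⟨hfxV, h⟩
        rw [hEC _ hfxC]
        exact hf.apply_mem_of_mem_placedSet hA'B' hx.2 hfxC
  · rw [hupd.eqOn_symm i hi y hy]
    exact hf.mapsTo_symm i hi y hy

theorem IsPartialMatch.exists_round (hcl : ∀ K ∈ 𝒦, IsClosed K) (hinv : TopInvariant 𝒦)
    (hV : IsOpen V) (h𝒰 : ∀ u ∈ 𝒰, IsOpen u) (hcov : V ⊆ ⋃₀ 𝒰)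
    (hA : ∀ i, A i ∈ 𝒦) (hA' : ∀ i, A' i ∈ 𝒦) (hAB : ∀ i, A i ⊆ B) (hA'B' : ∀ i, A' i ⊆ B')
    (hB : IsAbsorptive 𝒦 B) (hB' : IsAbsorptive 𝒦 B')
    (hf : IsPartialMatch V 𝒰 A A' B B' n n δ f) (hδ₀ : 0 ≤ δ) (hδ : δ + 2 * η ≤ 1)
    (hη₀ : 0 < η) (hη₁ : η ≤ 1) :
    ∃ f', IsPartialMatch V 𝒰 A A' B B' (n + 1) (n + 1) (δ + 4 * η) f' ∧
      IsCloseUpdate V A A' n n (2 * η) f f' := by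
  obtain ⟨g, hg, hfg⟩ :=
    hf.exists_forth hcl hinv hV h𝒰 hcov hA hA' hA'B' hB' hδ₀ (by linarith) hη₀ hη₁
  obtain ⟨h, hh, hgh⟩ :=
    hg.symm.exists_forth hcl hinv hV h𝒰 hcov hA' hA hAB hB (by linarith) hδ hη₀ hη₁
  have hgh' := hgh.symm
  rw [Homeomorph.symm_symm] at hgh'
  refine ⟨h.symm, ?_, two_mul η ▸ hfg.trans (hgh'.mono n.le_succ le_rfl)⟩
  convert hh.symm using 1
  ring

-- `(1 - 2⁻ⁿ) / 2` stays below `1 / 2`, so the limit moves points strictly less than the gauge.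
theorem exists_seq_isPartialMatch (hcl : ∀ K ∈ 𝒦, IsClosed K) (hinv : TopInvariant 𝒦)
    (hV : IsOpen V) (h𝒰 : ∀ u ∈ 𝒰, IsOpen u) (hcov : V ⊆ ⋃₀ 𝒰)
    (hA : ∀ i, A i ∈ 𝒦) (hA' : ∀ i, A' i ∈ 𝒦) (hAB : ∀ i, A i ⊆ B) (hA'B' : ∀ i, A' i ⊆ B')
    (hB : IsAbsorptive 𝒦 B) (hB' : IsAbsorptive 𝒦 B') :
    ∃ f : ℕ → X ≃ₜ X, (∀ n, IsPartialMatch V 𝒰 A A' B B' n n ((1 - (1 / 2) ^ n) / 2) (f n)) ∧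
      ∀ n, IsCloseUpdate V A A' n n ((1 / 2) ^ n / 8) (f n) (f (n + 1)) := by
  refine exists_seq_of_forall_exists (a := Homeomorph.refl X) ⟨fun _ _ => rfl, ?_, ?_,
    fun _ h => absurd h (Nat.not_lt_zero _), fun _ h => absurd h (Nat.not_lt_zero _)⟩
    fun n f hf => ?_
  · simp
  · simp
  have hq₀ : (0 : ℝ) < (1 / 2) ^ n := by positivity
  have hq₁ : ((1 : ℝ) / 2) ^ n ≤ 1 := pow_le_one₀ (by norm_num) (by norm_num)
  have := hf.exists_round hcl hinv hV h𝒰 hcov hA hA' hAB hA'B' hB hB' (η := (1 / 2) ^ n / 16)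
    (by linarith) (by linarith) (by positivity) (by linarith)
  rwa [show (1 - (1 / 2 : ℝ) ^ n) / 2 + 4 * ((1 / 2) ^ n / 16) = (1 - (1 / 2) ^ (n + 1)) / 2 by
    ring, show 2 * ((1 / 2 : ℝ) ^ n / 16) = (1 / 2) ^ n / 8 by ring] at this

end BackAndForth

theorem exists_homeomorph_absorptive {X : Type*} [MetricSpace X] [CompleteSpace X]
    {𝒦 : Set (Set X)} (hcl : ∀ K ∈ 𝒦, IsClosed K) (hinv : TopInvariant 𝒦) {B B' : Set X}
    (hB : IsAbsorptive 𝒦 B) (hB' : IsAbsorptive 𝒦 B') {V : Set X} (hV : IsOpen V)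
    {𝒰 : Set (Set X)} (h𝒰 : ∀ u ∈ 𝒰, IsOpen u) (hcov : V ⊆ ⋃₀ 𝒰) :
    ∃ H : X ≃ₜ X, (∀ x ∉ V, H x = x) ∧ (∀ x ∈ V, x ∈ B ↔ H x ∈ B') ∧
      ∀ x, H x = x ∨ ∃ u ∈ 𝒰, H x ∈ u ∧ x ∈ u := by
  obtain ⟨A, hA, rfl⟩ := hB.1
  obtain ⟨A', hA', rfl⟩ := hB'.1
  obtain ⟨f, hf, hff⟩ := exists_seq_isPartialMatch hcl hinv hV h𝒰 hcov hA hA'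
    (subset_iUnion A) (subset_iUnion A') hB hB'
  have hgeom (n : ℕ) : (1 / 2 : ℝ) ^ n / 8 = 1 / 4 / 2 / 2 ^ n := by
    rw [div_pow, one_pow]
    ring
  obtain ⟨H, hH, hH'⟩ := exists_homeomorph_tendsto_of_dist_le_geometric_two (F := f)
    (fun n x => by rw [dist_comm, ← hgeom]; exact (hff n).dist_le x)
    (fun n y => by rw [dist_comm, ← hgeom]; exact (hff n).dist_symm_le y)
  have hfix : ∀ x ∉ V, H x = x := fun x hx => tendsto_nhds_unique (hH x)
    ((tendsto_congr fun n => (hf n).fixes_compl x hx).2 tendsto_const_nhds)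
  have hdist (x : X) : dist (H x) x ≤ coverGauge V 𝒰 x / 2 := by
    refine le_of_tendsto ((hH x).dist tendsto_const_nhds) (Eventually.of_forall fun n => ?_)
    have := coverGauge_nonneg V 𝒰 x
    have : (0 : ℝ) ≤ (1 / 2) ^ n := by positivity
    nlinarith [(hf n).dist_le x]
  have hmaps (i : ℕ) (x : X) (hx : x ∈ A i ∩ V) : H x ∈ ⋃ i, A' i := by
    rw [eq_of_tendsto_of_forall_succ_eq (hH x) (N := i + 1) fun m hm => (hff m).eqOn i hm x hx]
    exact (hf (i + 1)).mapsTo i (lt_add_one i) x hx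
  have hmaps_symm (i : ℕ) (y : X) (hy : y ∈ A' i ∩ V) : H.symm y ∈ ⋃ i, A i := by
    rw [eq_of_tendsto_of_forall_succ_eq (hH' y) (N := i + 1)
      fun m hm => (hff m).eqOn_symm i hm y hy]
    exact (hf (i + 1)).mapsTo_symm i (lt_add_one i) y hy
  refine ⟨H, hfix, fun x hxV => ⟨fun hx => ?_, fun hx => ?_⟩, fun x => ?_⟩
  · obtain ⟨i, hi⟩ := mem_iUnion.1 hx
    exact hmaps i x ⟨hi, hxV⟩
  · obtain ⟨i, hi⟩ := mem_iUnion.1 hx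
    have hHxV : H x ∈ V := (apply_mem_iff_of_forall_notMem H.injective hfix x).2 hxV
    simpa using hmaps_symm i (H x) ⟨hi, hHxV⟩
  · by_cases hx : x ∈ V
    · obtain ⟨u, hu, hHx, hxu⟩ := exists_mem_of_dist_lt_coverGauge
        ((hdist x).trans_lt (half_lt_self (coverGauge_pos hV h𝒰 hcov hx)))
      exact Or.inr ⟨u, hu, hHx.1, hxu.1⟩
    · exact Or.inl (hfix x hx)

end AbsorptiveSet

open AbsorptiveSet

/-- Uniqueness theorem for `𝒦`-absorptive sets in a Polish space: if `𝒦` is a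
topologically invariant family of closed sets and `B`, `B'` are `𝒦`-absorptive, then for
every open `V` and every open cover `𝒰` of `V` there is a homeomorphism `h : V → V` with
`h(V ∩ B) = V ∩ B'` and `(h, id_V) ≺ 𝒰`; in particular, `B` and `B'` are ambiently
homeomorphic. -/
theorem absorptive_unique {X : Type*} [TopologicalSpace X] [PolishSpace X]
    (𝒦 : Set (Set X)) (hcl : ∀ K ∈ 𝒦, IsClosed K) (hinv : TopInvariant 𝒦)
    (B B' : Set X) (hB : IsAbsorptive 𝒦 B) (hB' : IsAbsorptive 𝒦 B') :
    (∀ V : Set X, IsOpen V → ∀ 𝒰 : Set (Set X), (∀ u ∈ 𝒰, IsOpen u) → V ⊆ ⋃₀ 𝒰 →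
      ∃ h : V ≃ₜ V, (∀ x : V, ((x : X) ∈ B ↔ (h x : X) ∈ B')) ∧
        ∀ x : V, (h x : X) = (x : X) ∨ ∃ u ∈ 𝒰, (h x : X) ∈ u ∧ (x : X) ∈ u) ∧
    ∃ h : X ≃ₜ X, h '' B = B' := by
  let := TopologicalSpace.upgradeIsCompletelyMetrizable X
  refine ⟨fun V hV 𝒰 h𝒰 hcov => ?_, ?_⟩
  · obtain ⟨H, hfix, hBB', hclose⟩ := exists_homeomorph_absorptive hcl hinv hB hB' hV h𝒰 hcov
    exact ⟨H.subtype fun x => (apply_mem_iff_of_forall_notMem H.injective hfix x).symm,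
      fun x => hBB' x x.2, fun x => hclose x⟩
  · obtain ⟨H, -, hBB', -⟩ := exists_homeomorph_absorptive hcl hinv hB hB' isOpen_univ
      (𝒰 := {univ}) (by simp) (by simp)
    refine ⟨H, ext fun y => ?_⟩
    rw [H.image_eq_preimage_symm, mem_preimage, hBB' _ (mem_univ _), H.apply_symm_apply]
end

section
/- Let X be a Polish space and 𝒦 a topologically invariant family of closed subsets of X, and assume some 𝒦-absorptive set B ⊆ X exists. Then a subset A ⊆ X is σ𝒦-universal in X if and only if A is 𝒦-absorptive. -/
open Set Topology

/-!
If `A` is `σ𝒦`-universal, some homeomorphism `g` carries `B` into `A`; absorptivity is carried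
over to `g(B)` by conjugation and from there to the larger `σ𝒦`-set `A`.

Conversely, let `A` be absorptive and `K = ⋃ Kₙ`. Fix a complete metric on `X` and build
homeomorphisms `Fₖ₊₁ = Gₖ ∘ Fₖ`, where `Gₖ` fixes the closed set `⋃_{i<k} Fₖ(Kᵢ)` and pushes the
rest of `Fₖ(Kₖ)` into `A`. Applying absorptivity on the complement with a fine enough cover, `Gₖ`
moves every point by at most half its distance to the complement, so it extends by the identity,
and it moves all earlier `Fₘ⁻¹` and `Fₘ ∘ Fₖ⁻¹` by at most `2⁻ᵏ⁻¹`. Hence `Fₖ` and `Fₖ⁻¹` converge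
uniformly to mutually inverse continuous maps, and the limit sends each `x ∈ Kᵢ` to the value
`Fₖ(x) ∈ A` at which the sequence has become constant.
-/

open Metric Filter

section Invariance

variable {X : Type*} [TopologicalSpace X] {𝒦 : Set (Set X)}

theorem TopInvariant.image_mem (hinv : TopInvariant 𝒦) (g : X ≃ₜ X) {K : Set X} (hK : K ∈ 𝒦) :
    g '' K ∈ 𝒦 :=
  hinv g ▸ mem_image_of_mem _ hK

theorem TopInvariant.image_mem_sigmaFam (hinv : TopInvariant 𝒦) (g : X ≃ₜ X) {A : Set X}
    (hA : A ∈ sigmaFam 𝒦) : g '' A ∈ sigmaFam 𝒦 := by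
  obtain ⟨f, hf, rfl⟩ := hA
  exact ⟨fun n => g '' f n, fun n => hinv.image_mem g (hf n), image_iUnion⟩

theorem IsAbsorptive.mono {A B : Set X} (hB : IsAbsorptive 𝒦 B) (hBA : B ⊆ A)
    (hA : A ∈ sigmaFam 𝒦) : IsAbsorptive 𝒦 A := by
  refine ⟨hA, fun K hK V hV 𝒰 h𝒰 hV𝒰 => ?_⟩
  obtain ⟨h, hhB, hh𝒰⟩ := hB.2 K hK V hV 𝒰 h𝒰 hV𝒰
  exact ⟨h, fun x hx => hBA (hhB x hx), hh𝒰⟩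

theorem IsAbsorptive.image (hinv : TopInvariant 𝒦) {B : Set X} (hB : IsAbsorptive 𝒦 B)
    (g : X ≃ₜ X) : IsAbsorptive 𝒦 (g '' B) := by
  refine ⟨hinv.image_mem_sigmaFam g hB.1, fun K hK V hV 𝒰 h𝒰 hV𝒰 => ?_⟩
  have hK' : g ⁻¹' K ∈ 𝒦 := g.image_symm ▸ hinv.image_mem g.symm hK
  obtain ⟨h, hhB, hh𝒰⟩ := hB.2 _ hK' _ (hV.preimage g.continuous) ((g ⁻¹' ·) '' 𝒰)
    (by rintro _ ⟨u, hu, rfl⟩; exact (h𝒰 u hu).preimage g.continuous)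
    (fun x hx => by
      obtain ⟨u, hu, hxu⟩ := hV𝒰 hx
      exact ⟨_, mem_image_of_mem _ hu, hxu⟩)
  let e : g ⁻¹' V ≃ₜ V := g.sets rfl
  refine ⟨e.symm.trans (h.trans e), fun x hx => ?_, fun x => ?_⟩
  · exact ⟨_, hhB (e.symm x) (by simpa [e] using hx), rfl⟩
  · rcases hh𝒰 (e.symm x) with hfix | ⟨_, ⟨u, hu, rfl⟩, hhu, hxu⟩
    · left
      simp [e, hfix]
    · right
      exact ⟨u, hu, hhu, by simpa [e] using hxu⟩

end Invariance

section Metric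

variable {X : Type*} [MetricSpace X]

theorem continuous_ofSubtype_of_dist_le {V : Set X} [DecidablePred (· ∈ V)] (hV : IsOpen V)
    (τ : V ≃ₜ V) (hτ : ∀ (x : V), ∀ b ∉ V, dist (τ x : X) x ≤ dist (x : X) b) :
    Continuous (Equiv.Perm.ofSubtype τ.toEquiv) := by
  set e := Equiv.Perm.ofSubtype τ.toEquiv
  have hfix : ∀ b ∉ V, e b = b := fun b hb => Equiv.Perm.ofSubtype_apply_of_not_mem _ hb
  have hmove : ∀ x, ∀ b ∉ V, dist (e x) x ≤ dist x b := by
    intro x b hb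
    by_cases hx : x ∈ V
    · simpa [e, Equiv.Perm.ofSubtype_apply_of_mem _ hx] using hτ ⟨x, hx⟩ b hb
    · simp [hfix x hx]
  refine continuous_iff_continuousAt.2 fun b => ?_
  by_cases hb : b ∈ V
  · have hon : ContinuousOn e V := by
      rw [continuousOn_iff_continuous_domRestrict]
      exact (continuous_subtype_val.comp τ.continuous).congr fun x => by simp [e]
    exact hon.continuousAt (hV.mem_nhds hb)
  · refine Metric.continuousAt_iff.2 fun ε hε => ⟨ε / 2, half_pos hε, fun x hx => ?_⟩
    rw [hfix b hb]
    calc dist (e x) b ≤ dist (e x) x + dist x b := dist_triangle _ _ _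
      _ ≤ dist x b + dist x b := by gcongr; exact hmove x b hb
      _ < ε := by linarith

theorem exists_homeomorph_extend_of_two_mul_dist_le {V : Set X} (hV : IsOpen V) (g : V ≃ₜ V)
    (hg : ∀ (x : V), ∀ b ∉ V, 2 * dist (g x : X) x ≤ dist (x : X) b) :
    ∃ G : X ≃ₜ X, (∀ x : V, G x = g x) ∧ ∀ x ∉ V, G x = x := by
  classical
  have hsymm : ∀ (y : V), ∀ b ∉ V, dist (g.symm y : X) y ≤ dist (y : X) b := by
    intro y b hb
    have h2 := hg (g.symm y) b hb
    rw [Homeomorph.apply_symm_apply, dist_comm] at h2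
    linarith [dist_triangle (g.symm y : X) y b]
  refine ⟨⟨Equiv.Perm.ofSubtype g.toEquiv,
    continuous_ofSubtype_of_dist_le hV g fun x b hb => ?_, ?_⟩,
    fun x => Equiv.Perm.ofSubtype_apply_coe _ x,
    fun x hx => Equiv.Perm.ofSubtype_apply_of_not_mem _ hx⟩
  · exact (le_mul_of_one_le_left dist_nonneg one_le_two).trans (hg x b hb)
  · have : (Equiv.Perm.ofSubtype g.toEquiv).symm = Equiv.Perm.ofSubtype g.symm.toEquiv :=
      (map_inv Equiv.Perm.ofSubtype g.toEquiv).symm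
    change Continuous (Equiv.Perm.ofSubtype g.toEquiv).symm
    rw [this]
    exact continuous_ofSubtype_of_dist_le hV g.symm hsymm

theorem IsAbsorptive.exists_homeomorph_dist_le {Y : Type*} [PseudoMetricSpace Y]
    {𝒦 : Set (Set X)} {A : Set X} (hA : IsAbsorptive 𝒦 A) {K : Set X} (hK : K ∈ 𝒦)
    {V : Set X} (hV : IsOpen V) {φ : X → Y} (hφ : Continuous φ) {ε : ℝ} (hε : 0 < ε) :
    ∃ G : X ≃ₜ X, (∀ x ∉ V, G x = x) ∧ (∀ x ∈ K ∩ V, G x ∈ A) ∧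
      ∀ x, dist (φ (G x)) (φ x) ≤ ε := by
  choose! r hr hrV using Metric.isOpen_iff.1 hV
  -- a point `x` moved inside `U z` stays `ε`-close under `φ` and moves by less than
  -- `2 r z / 5`, while it lies at distance more than `4 r z / 5` from the complement of `V`
  let U : X → Set X := fun z => ball z (r z / 5) ∩ φ ⁻¹' ball (φ z) (ε / 2)
  obtain ⟨g, hgA, hgU⟩ := hA.2 K hK V hV (U '' V)
    (by rintro _ ⟨z, -, rfl⟩; exact isOpen_ball.inter (isOpen_ball.preimage hφ))
    (fun z hz => ⟨U z, mem_image_of_mem U hz, mem_ball_self (by linarith [hr z hz]),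
      mem_ball_self (half_pos hε)⟩)
  have hmove : ∀ x : V, (∀ b ∉ V, 2 * dist (g x : X) x ≤ dist (x : X) b) ∧
      dist (φ (g x)) (φ x) ≤ ε := by
    intro x
    rcases hgU x with hfix | ⟨_, ⟨z, hz, rfl⟩, ⟨hgz, hφgz⟩, ⟨hxz, hφxz⟩⟩
    · simp only [hfix, dist_self, mul_zero]
      exact ⟨fun b _ => dist_nonneg, hε.le⟩
    · rw [mem_ball] at hgz hxz
      rw [mem_preimage, mem_ball] at hφgz hφxz
      refine ⟨fun b hb => ?_, ?_⟩
      · have hzb : r z ≤ dist z b := not_lt.1 fun h => hb (hrV z hz (mem_ball'.2 h))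
        linarith [dist_triangle (g x : X) z x, dist_triangle z x b, dist_comm (x : X) z]
      · linarith [dist_triangle (φ (g x)) (φ z) (φ x), dist_comm (φ x) (φ z)]
  obtain ⟨G, hGg, hGfix⟩ := exists_homeomorph_extend_of_two_mul_dist_le hV g fun x => (hmove x).1
  refine ⟨G, hGfix, fun x ⟨hxK, hxV⟩ => ?_, fun x => ?_⟩
  · rw [hGg ⟨x, hxV⟩]
    exact hgA ⟨x, hxV⟩ hxK
  · by_cases hxV : x ∈ V
    · rw [hGg ⟨x, hxV⟩]
      exact (hmove ⟨x, hxV⟩).2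
    · rw [hGfix x hxV, dist_self]
      exact hε.le

theorem IsAbsorptive.exists_homeomorph_fixing_dist_le {𝒦 : Set (Set X)} {A : Set X}
    (hA : IsAbsorptive 𝒦 A) {C L : Set X} (hC : IsClosed C) (hL : L ∈ 𝒦) (F : X ≃ₜ X)
    (T : Finset (X ≃ₜ X)) {ε : ℝ} (hε : 0 < ε) :
    ∃ G : X ≃ₜ X, (∀ y ∈ C, G y = y) ∧ (∀ y ∈ L \ C, G y ∈ A) ∧
      ∀ h ∈ T, ∀ y, dist (h.symm (G y)) (h.symm y) ≤ ε ∧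
        dist (h (F.symm (G y))) (h (F.symm y)) ≤ ε := by
  obtain ⟨G, hGfix, hGA, hGφ⟩ := hA.exists_homeomorph_dist_le hL hC.isOpen_compl
    (φ := fun y (h : T) => (h.1.symm y, h.1 (F.symm y)))
    (continuous_pi fun h => h.1.symm.continuous.prodMk (h.1.continuous.comp F.symm.continuous)) hε
  refine ⟨G, fun y hy => hGfix y (not_not_intro hy), hGA, fun h hT y => ?_⟩
  have := (dist_le_pi_dist _ _ ⟨h, hT⟩).trans (hGφ y)
  rwa [Prod.dist_eq, max_le_iff] at this

theorem IsAbsorptive.exists_seq_homeomorph {𝒦 : Set (Set X)} {A : Set X}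
    (hA : IsAbsorptive 𝒦 A) (hcl : ∀ K ∈ 𝒦, IsClosed K) (hinv : TopInvariant 𝒦)
    {K : ℕ → Set X} (hK : ∀ n, K n ∈ 𝒦) :
    ∃ F : ℕ → X ≃ₜ X, F 0 = Homeomorph.refl X ∧
      (∀ k, ∀ m ≤ k, ∀ x,
        dist ((F m).symm (F k x)) ((F m).symm (F (k + 1) x)) ≤ 1 / 2 / 2 ^ k) ∧
      (∀ k, ∀ m ≤ k, ∀ x,
        dist (F m ((F k).symm x)) (F m ((F (k + 1)).symm x)) ≤ 1 / 2 / 2 ^ k) ∧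
      (∀ k, ∀ i < k, ∀ x ∈ K i, F (k + 1) x = F k x) ∧
      ∀ k, ∀ x ∈ K k, (∀ i < k, x ∉ K i) → F (k + 1) x ∈ A := by
  classical
  -- `T` records the homeomorphisms built so far, which the next step must control
  have hstep : ∀ (k : ℕ) (F : X ≃ₜ X) (T : Finset (X ≃ₜ X)), ∃ G : X ≃ₜ X,
      (∀ y ∈ ⋃ i < k, F '' K i, G y = y) ∧ (∀ y ∈ F '' K k \ ⋃ i < k, F '' K i, G y ∈ A) ∧
      ∀ h ∈ T, ∀ y, dist (h.symm (G y)) (h.symm y) ≤ 1 / 2 / 2 ^ k ∧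
        dist (h (F.symm (G y))) (h (F.symm y)) ≤ 1 / 2 / 2 ^ k := fun k F T =>
    hA.exists_homeomorph_fixing_dist_le
      ((finite_lt_nat k).isClosed_biUnion fun i _ => F.isClosed_image.2 (hcl _ (hK i)))
      (hinv.image_mem F (hK k)) F T (by positivity)
  choose G hGfix hGA hGctrl using hstep
  let next (k : ℕ) (p : (X ≃ₜ X) × Finset (X ≃ₜ X)) : (X ≃ₜ X) × Finset (X ≃ₜ X) :=
    (p.1.trans (G k p.1 p.2), insert (p.1.trans (G k p.1 p.2)) p.2)
  let s (k : ℕ) : (X ≃ₜ X) × Finset (X ≃ₜ X) :=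
    Nat.rec (Homeomorph.refl X, {Homeomorph.refl X}) next k
  set F : ℕ → X ≃ₜ X := fun k => (s k).1
  have hF : ∀ k x, F (k + 1) x = G k (F k) (s k).2 (F k x) := fun _ _ => rfl
  have hFsymm : ∀ k x, (F (k + 1)).symm x = (F k).symm ((G k (F k) (s k).2).symm x) :=
    fun _ _ => rfl
  have hmem : ∀ k, ∀ m ≤ k, F m ∈ (s k).2 := by
    intro k
    induction k with
    | zero => intro m hm; rw [Nat.le_zero.1 hm]; exact Finset.mem_singleton_self _
    | succ k ih =>
      intro m hm
      rcases Nat.of_le_succ hm with hm | rfl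
      · exact Finset.mem_insert_of_mem (ih m hm)
      · exact Finset.mem_insert_self _ _
  refine ⟨F, rfl, fun k m hm x => ?_, fun k m hm x => ?_, fun k i hi x hx => ?_,
    fun k x hx hmin => ?_⟩
  · rw [hF, dist_comm]
    exact (hGctrl k _ _ _ (hmem k m hm) _).1
  · obtain ⟨y, rfl⟩ := (G k (F k) (s k).2).surjective x
    rw [hFsymm, Homeomorph.symm_apply_apply]
    exact (hGctrl k _ _ _ (hmem k m hm) y).2
  · rw [hF]
    exact hGfix k _ _ _ (mem_iUnion₂.2 ⟨i, hi, mem_image_of_mem _ hx⟩)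
  · rw [hF]
    refine hGA k _ _ _ ⟨mem_image_of_mem _ hx, fun hC => ?_⟩
    obtain ⟨i, hi, hxi⟩ := mem_iUnion₂.1 hC
    exact hmin i hi ((F k).injective.mem_set_image.1 hxi)

theorem dist_le_of_le_geometric_two_of_tendsto_of_ge {u : ℕ → X} {a : X} (m : ℕ)
    (hu : ∀ k ≥ m, dist (u k) (u (k + 1)) ≤ 1 / 2 / 2 ^ k) (ha : Tendsto u atTop (𝓝 a)) :
    dist (u m) a ≤ 1 / 2 ^ m := by
  have hshift : ∀ n, dist (u (n + m)) (u (n + 1 + m)) ≤ 1 / 2 ^ m / 2 / 2 ^ n := by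
    intro n
    calc dist (u (n + m)) (u (n + 1 + m)) ≤ 1 / 2 / 2 ^ (n + m) := by
          rw [add_right_comm]; exact hu _ (Nat.le_add_left m n)
      _ = 1 / 2 ^ m / 2 / 2 ^ n := by rw [pow_add]; ring
  simpa using dist_le_of_le_geometric_two_of_tendsto₀ (f := fun n => u (n + m)) hshift
    (ha.comp (tendsto_add_atTop_nat m))

variable [CompleteSpace X]

theorem exists_continuous_tendsto_of_dist_symm_le (F : ℕ → X ≃ₜ X)
    (h0 : F 0 = Homeomorph.refl X)
    (hF : ∀ k, ∀ m ≤ k, ∀ x, dist ((F m).symm (F k x)) ((F m).symm (F (k + 1) x)) ≤ 1 / 2 / 2 ^ k) :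
    ∃ Φ : X → X, Continuous Φ ∧ (∀ x, Tendsto (F · x) atTop (𝓝 (Φ x))) ∧
      ∀ x, Tendsto (fun m => (F m).symm (Φ x)) atTop (𝓝 x) := by
  have hstep : ∀ k x, dist (F k x) (F (k + 1) x) ≤ 1 / 2 / 2 ^ k := fun k x => by
    simpa [h0] using hF k 0 k.zero_le x
  choose Φ hΦ using fun x =>
    cauchySeq_tendsto_of_complete (cauchySeq_of_le_geometric_two (hstep · x))
  have hunif : ∀ m x, dist (F m x) (Φ x) ≤ 1 / 2 ^ m := fun m x =>
    dist_le_of_le_geometric_two_of_tendsto_of_ge m (fun k _ => hstep k x) (hΦ x)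
  have hpow : Tendsto (fun m : ℕ => 1 / (2 : ℝ) ^ m) atTop (𝓝 0) := by
    simpa only [one_div_pow] using tendsto_pow_atTop_nhds_zero_of_lt_one (r := (1 / 2 : ℝ))
      (by norm_num) (by norm_num)
  have hcont : Continuous Φ := by
    refine TendstoUniformly.continuous (F := fun k => F k) (p := atTop) ?_
      (Frequently.of_forall fun k => (F k).continuous)
    refine Metric.tendstoUniformly_iff.2 fun ε hε => ?_
    filter_upwards [hpow.eventually (gt_mem_nhds hε)] with m hm x
    exact (dist_comm (Φ x) (F m x) ▸ hunif m x).trans_lt hm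
  refine ⟨Φ, hcont, hΦ, fun x => tendsto_iff_dist_tendsto_zero.2 ?_⟩
  refine squeeze_zero (fun _ => dist_nonneg) (fun m => ?_) hpow
  have := dist_le_of_le_geometric_two_of_tendsto_of_ge m (fun k hk => hF k m hk x)
    (((F m).symm.continuous.tendsto _).comp (hΦ x))
  simpa [dist_comm] using this

theorem exists_homeomorph_tendsto_of_dist_symm_le (F : ℕ → X ≃ₜ X)
    (h0 : F 0 = Homeomorph.refl X)
    (hF : ∀ k, ∀ m ≤ k, ∀ x, dist ((F m).symm (F k x)) ((F m).symm (F (k + 1) x)) ≤ 1 / 2 / 2 ^ k)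
    (hFsymm : ∀ k, ∀ m ≤ k, ∀ x,
      dist (F m ((F k).symm x)) (F m ((F (k + 1)).symm x)) ≤ 1 / 2 / 2 ^ k) :
    ∃ Φ : X ≃ₜ X, ∀ x, Tendsto (F · x) atTop (𝓝 (Φ x)) := by
  obtain ⟨Φ, hΦc, hΦ, hΦinv⟩ := exists_continuous_tendsto_of_dist_symm_le F h0 hF
  obtain ⟨Ψ, hΨc, hΨ, hΨinv⟩ :=
    exists_continuous_tendsto_of_dist_symm_le (fun k => (F k).symm) (by simp [h0]) hFsymm
  have hleft : ∀ x, Ψ (Φ x) = x := fun x => tendsto_nhds_unique (hΨ (Φ x)) (hΦinv x)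
  have hright : ∀ y, Φ (Ψ y) = y := fun y => tendsto_nhds_unique (hΦ (Ψ y)) (hΨinv y)
  exact ⟨⟨⟨Φ, Ψ, hleft, hright⟩, hΦc, hΨc⟩, hΦ⟩

theorem IsAbsorptive.exists_homeomorph_image_iUnion_subset {𝒦 : Set (Set X)} {A : Set X}
    (hA : IsAbsorptive 𝒦 A) (hcl : ∀ K ∈ 𝒦, IsClosed K) (hinv : TopInvariant 𝒦)
    {K : ℕ → Set X} (hK : ∀ n, K n ∈ 𝒦) : ∃ Φ : X ≃ₜ X, Φ '' ⋃ n, K n ⊆ A := by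
  classical
  obtain ⟨F, h0, hF, hFsymm, hstab, habs⟩ := hA.exists_seq_homeomorph hcl hinv hK
  obtain ⟨Φ, hΦ⟩ := exists_homeomorph_tendsto_of_dist_symm_le F h0 hF hFsymm
  refine ⟨Φ, ?_⟩
  rintro _ ⟨x, hx, rfl⟩
  have hex : ∃ i, x ∈ K i := mem_iUnion.1 hx
  set i := Nat.find hex
  have hconst : ∀ k ≥ i + 1, F k x = F (i + 1) x := by
    intro k hk
    induction k, hk using Nat.le_induction with
    | base => rfl
    | succ k hk ih => rw [hstab k i hk x (Nat.find_spec hex), ih]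
  rw [tendsto_nhds_unique (hΦ x) (tendsto_atTop_of_eventually_const hconst)]
  exact habs i x (Nat.find_spec hex) fun j hj => Nat.find_min hex hj

end Metric

/-- If a `𝒦`-absorptive set exists in a Polish space `X` (for a topologically invariant
family `𝒦` of closed sets), then a set `A ⊆ X` is `σ𝒦`-universal if and only if it is
`𝒦`-absorptive. -/
theorem sigmaK_universal_iff_absorptive {X : Type*} [TopologicalSpace X] [PolishSpace X]
    (𝒦 : Set (Set X)) (hcl : ∀ K ∈ 𝒦, IsClosed K) (hinv : TopInvariant 𝒦)
    (B : Set X) (hB : IsAbsorptive 𝒦 B) (A : Set X) :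
    (A ∈ sigmaFam 𝒦 ∧ ∀ K ∈ sigmaFam 𝒦, ∃ h : X ≃ₜ X, h '' K ⊆ A) ↔
      IsAbsorptive 𝒦 A := by
  refine ⟨fun ⟨hAσ, huniv⟩ => ?_, fun hA => ⟨hA.1, ?_⟩⟩
  · obtain ⟨g, hg⟩ := huniv B hB.1
    exact (hB.image hinv g).mono hg hAσ
  · rintro _ ⟨K, hK, rfl⟩
    let := TopologicalSpace.upgradeIsCompletelyMetrizable X
    exact hA.exists_homeomorph_image_iUnion_subset hcl hinv hK
end
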